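/- arXiv:math/0304254 — 3 statements merged into one kernel-verified Lean document; each statement's English description precedes it below -/
import Mathlib

section
/- Under the RTT relations, quantum minors are antisymmetric in their row indices and in their column indices: for any m ≥ 1, index tuples a = (a_1,…,a_m), b = (b_1,…,b_m) in {1,…,n}, and any permutation ρ ∈ S_m, one has t(a_{ρ(1)},…,a_{ρ(m)}; b_1,…,b_m)(u) = sgn(ρ)·t(a_1,…,a_m; b_1,…,b_m)(u) and t(a_1,…,a_m; b_{ρ(1)},…,b_{ρ(m)})(u) = sgn(ρ)·t(a_1,…,a_m; b_1,…,b_m)(u). -/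
/-- The substitution `u ↦ u + c` on a formal power series in `u⁻¹` with coefficients in a
`K`-algebra `A`: the `u^{-k}`-coefficient of `f(u+c)` is
`∑_{r ≤ k} (-1)^{k-r} C(k-1, k-r) c^{k-r} • f^{(r)}`,
coming from `(u+c)^{-r} = ∑_m binom(-r, m) c^m u^{-r-m}`. -/
noncomputable def shiftPS (K : Type*) [Field K] {A : Type*} [Ring A] [Algebra K A]
    (c : K) (f : PowerSeries A) : PowerSeries A :=
  PowerSeries.mk fun k => ∑ r ∈ Finset.range (k + 1),
    ((-1 : K) ^ (k - r) * ((k - 1).choose (k - r) : K) * c ^ (k - r)) •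
      PowerSeries.coeff r f

/-- The quantum minor
`t(a;b)(u) = ∑_{σ ∈ S_m} sgn σ · T_{a_{σ(1)},b_1}(u) T_{a_{σ(2)},b_2}(u+1) ⋯ T_{a_{σ(m)},b_m}(u+m-1)`
attached to a family of coefficients `T : Fin n → Fin n → ℕ → A`
(where `T_{i,j}(u) = ∑_k T i j k · u^{-k}`). -/
noncomputable def qminor (K : Type*) [Field K] {A : Type*} [Ring A] [Algebra K A]
    {n m : ℕ} (T : Fin n → Fin n → ℕ → A) (a b : Fin m → Fin n) : PowerSeries A :=
  ∑ σ : Equiv.Perm (Fin m),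
    (Equiv.Perm.sign σ : ℤ) •
      ((List.finRange m).map
        fun (p : Fin m) => shiftPS K (((p : ℕ) : K)) (PowerSeries.mk fun k => T (a (σ p)) (b p) k)).prod

/-- The RTT relations for a family `T : Fin n → Fin n → ℕ → A` of coefficients
(`T_{i,j}(u) = δ_{i,j} + ∑_{k≥1} T i j k u^{-k}`), stated coefficient-wise:
`[T_{i,j}^{(r)}, T_{k,l}^{(s+1)}] − [T_{i,j}^{(r+1)}, T_{k,l}^{(s)}]
  = T_{k,j}^{(r)} T_{i,l}^{(s)} − T_{k,j}^{(s)} T_{i,l}^{(r)}`. -/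
def RTTrel {A : Type*} [Ring A] {n : ℕ} (T : Fin n → Fin n → ℕ → A) : Prop :=
  (∀ i j : Fin n, T i j 0 = if i = j then 1 else 0) ∧
  ∀ (i j k l : Fin n) (r s : ℕ),
    (T i j r * T k l (s + 1) - T k l (s + 1) * T i j r)
      - (T i j (r + 1) * T k l s - T k l s * T i j (r + 1))
      = T k j r * T i l s - T k j s * T i l r

set_option linter.unusedSectionVars false
set_option linter.unusedTactic false
set_option maxHeartbeats 1000000

open Finset PowerSeries

namespace QMaux

variable {K : Type*} [Field K]

noncomputable def scoef (c : K) (k r : ℕ) : K :=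
  (-1 : K) ^ (k - r) * ((k - 1).choose (k - r) : K) * c ^ (k - r)

noncomputable def bcoef (c : K) (k r : ℕ) : K := if r ≤ k then scoef c k r else 0

noncomputable def geo (c : K) : PowerSeries K := PowerSeries.mk fun m => (-c) ^ m

noncomputable def scs (c : K) : PowerSeries K := PowerSeries.X * geo c

lemma coeff_geo_pow (c : K) (r n : ℕ) :
    (PowerSeries.coeff n) (geo c ^ (r + 1)) = (-c) ^ n * ((r + n).choose n : K) := by
  induction r generalizing n with
  | zero => simp [geo, PowerSeries.coeff_mk]
  | succ r ih =>
    rw [pow_succ, PowerSeries.coeff_mul, Finset.Nat.sum_antidiagonal_eq_sum_range_succ_mk]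
    have : ∀ i ∈ Finset.range (n + 1),
        (PowerSeries.coeff i) (geo c ^ (r + 1)) * (PowerSeries.coeff (n - i)) (geo c)
          = (-c) ^ n * ((r + i).choose i : K) := by
      intro i hi
      have hi' := Finset.mem_range.1 hi
      rw [ih i]
      simp only [geo, PowerSeries.coeff_mk]
      rw [mul_right_comm, ← pow_add]
      congr 2
      omega
    rw [Finset.sum_congr rfl this, ← Finset.mul_sum]
    congr 1
    have h1 : ∀ i ∈ Finset.range (n+1), ((r+i).choose i : K) = ((r+i).choose r : K) := by
      intro i _
      congr 1
      rw [Nat.add_comm r i, Nat.choose_symm_add]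
    rw [Finset.sum_congr rfl h1]
    have h2 : ∑ i ∈ Finset.range (n+1), ((r+i).choose r : K)
        = ((∑ i ∈ Finset.range (n+1), (r+i).choose r : ℕ) : K) := by push_cast; ring
    rw [h2]
    have h3 : ∑ i ∈ Finset.range (n+1), (r+i).choose r = ∑ j ∈ Finset.Icc r (r+n), j.choose r := by
      rw [← Finset.Ico_add_one_right_eq_Icc, Finset.sum_Ico_eq_sum_range]
      apply Finset.sum_congr (by congr 1; omega)
      intro i _; rfl
    rw [h3, Nat.sum_Icc_choose]
    have h4 : (r + n + 1).choose (r+1) = (r+n+1).choose n := by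
      have := Nat.choose_symm (n := r+n+1) (k := r+1) (by omega)
      rw [show r+n+1-(r+1) = n by omega] at this
      omega
    rw [h4]
    congr 2
    omega

lemma coeff_scs_pow (c : K) (r k : ℕ) :
    (PowerSeries.coeff k) (scs c ^ r) = bcoef c k r := by
  rw [scs, mul_pow, bcoef]
  by_cases h : r ≤ k
  · rw [show k = (k - r) + r by omega, PowerSeries.coeff_X_pow_mul, if_pos (by omega)]
    rcases Nat.eq_zero_or_pos r with hr | hr
    · subst hr
      simp only [pow_zero, PowerSeries.coeff_one, scoef]
      rcases Nat.eq_zero_or_pos k with hk | hk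
      · subst hk; simp
      · rw [if_neg (by omega)]
        rw [Nat.choose_eq_zero_of_lt (by omega)]
        simp
    · obtain ⟨r', rfl⟩ : ∃ r', r = r' + 1 := ⟨r - 1, by omega⟩
      rw [coeff_geo_pow, scoef, neg_pow]
      have e1 : k - (r' + 1) + (r' + 1) - (r' + 1) = k - (r' + 1) := by omega
      rw [e1]
      have e2 : r' + (k - (r' + 1)) = k - 1 := by omega
      rw [e2]
      ring_nf
      rw [show 1 + r' + (k - (1 + r')) - 1 = k - 1 from by omega]
  · rw [if_neg h]
    rw [PowerSeries.coeff_X_pow_mul' ]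
    rw [if_neg (by omega)]

lemma bcoef_conv (c : K) (k r s : ℕ) :
    ∑ p ∈ Finset.HasAntidiagonal.antidiagonal k, bcoef c p.1 r * bcoef c p.2 s = bcoef c k (r + s) := by
  simp only [← coeff_scs_pow]
  rw [pow_add, PowerSeries.coeff_mul]


variable {A : Type*} [Ring A] [Algebra K A]

lemma coeff_shiftPS (c : K) (f : PowerSeries A) (k : ℕ) :
    (PowerSeries.coeff k) (shiftPS K c f)
      = ∑ r ∈ Finset.range (k + 1), bcoef c k r • (PowerSeries.coeff r) f := by
  rw [shiftPS, PowerSeries.coeff_mk]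
  apply Finset.sum_congr rfl
  intro r hr
  have : r ≤ k := by have := Finset.mem_range.1 hr; omega
  rw [bcoef, if_pos this, scoef]

lemma pad_sum {M : Type*} [AddCommMonoid M] (f : ℕ → M) {t k : ℕ} (h : t ≤ k)
    (hf : ∀ r, t < r → f r = 0) :
    ∑ r ∈ Finset.range (t + 1), f r = ∑ r ∈ Finset.range (k + 1), f r := by
  apply Finset.sum_subset
  · exact Finset.range_subset_range.2 (by omega)
  · intro x hx hnx
    exact hf x (by simp only [Finset.mem_range] at hx hnx; omega)

lemma triangle {M : Type*} [AddCommMonoid M] (F : ℕ → ℕ → M) (N : ℕ) :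
    ∑ t ∈ Finset.range N, ∑ p ∈ Finset.HasAntidiagonal.antidiagonal t, F p.1 p.2
      = ∑ r ∈ Finset.range N, ∑ s ∈ Finset.range (N - r), F r s := by
  induction N with
  | zero => simp
  | succ N ih =>
    rw [Finset.sum_range_succ, ih, Finset.Nat.sum_antidiagonal_eq_sum_range_succ_mk]
    rw [Finset.sum_range_succ (fun r => ∑ s ∈ Finset.range (N + 1 - r), F r s)]
    have h1 : ∑ r ∈ Finset.range N, ∑ s ∈ Finset.range (N + 1 - r), F r s
        = ∑ r ∈ Finset.range N, (∑ s ∈ Finset.range (N - r), F r s + F r (N - r)) := by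
      apply Finset.sum_congr rfl
      intro r hr
      have hr' := Finset.mem_range.1 hr
      rw [show N + 1 - r = (N - r) + 1 by omega, Finset.sum_range_succ]
    rw [h1, Finset.sum_add_distrib]
    have h2 : ∑ k ∈ Finset.range (N + 1), F k (N - k)
        = ∑ r ∈ Finset.range N, F r (N - r) + F N (N - N) := Finset.sum_range_succ _ _
    rw [h2]
    simp only [Nat.sub_self, Nat.add_sub_cancel_left]
    rw [Finset.sum_range_one]
    abel

lemma triangle_pad {M : Type*} [AddCommMonoid M] (F : ℕ → ℕ → M) (k : ℕ)
    (hF : ∀ r s, k < r + s → F r s = 0) :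
    ∑ t ∈ Finset.range (k + 1), ∑ p ∈ Finset.HasAntidiagonal.antidiagonal t, F p.1 p.2
      = ∑ r ∈ Finset.range (k + 1), ∑ s ∈ Finset.range (k + 1), F r s := by
  rw [triangle]
  apply Finset.sum_congr rfl
  intro r hr
  have hr' := Finset.mem_range.1 hr
  rw [show k + 1 - r = (k - r) + 1 by omega]
  exact pad_sum _ (by omega) (fun s hs => hF r s (by omega))

lemma shiftPS_mul (c : K) (f g : PowerSeries A) :
    shiftPS K c (f * g) = shiftPS K c f * shiftPS K c g := by
  ext k
  rw [coeff_shiftPS, PowerSeries.coeff_mul]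
  have lhs : ∑ r ∈ Finset.range (k + 1), bcoef c k r • (PowerSeries.coeff r) (f * g)
      = ∑ r ∈ Finset.range (k + 1), ∑ s ∈ Finset.range (k + 1),
          bcoef c k (r + s) • ((PowerSeries.coeff r) f * (PowerSeries.coeff s) g) := by
    rw [← triangle_pad
        (fun r s => bcoef c k (r + s) • ((PowerSeries.coeff r) f * (PowerSeries.coeff s) g))
        k (fun r s h => by simp only [bcoef]; rw [if_neg (by omega), zero_smul])]
    apply Finset.sum_congr rfl
    intro t ht
    rw [PowerSeries.coeff_mul, Finset.smul_sum]
    apply Finset.sum_congr rfl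
    intro p hp
    have := Finset.HasAntidiagonal.mem_antidiagonal.1 hp
    rw [this]
  rw [lhs]
  -- now the RHS
  have rhs : ∑ p ∈ Finset.HasAntidiagonal.antidiagonal k,
        (PowerSeries.coeff p.1) (shiftPS K c f) * (PowerSeries.coeff p.2) (shiftPS K c g)
      = ∑ r ∈ Finset.range (k + 1), ∑ s ∈ Finset.range (k + 1),
          bcoef c k (r + s) • ((PowerSeries.coeff r) f * (PowerSeries.coeff s) g) := by
    have step1 : ∀ p ∈ Finset.HasAntidiagonal.antidiagonal k,
        (PowerSeries.coeff p.1) (shiftPS K c f) * (PowerSeries.coeff p.2) (shiftPS K c g)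
        = ∑ r ∈ Finset.range (k + 1), ∑ s ∈ Finset.range (k + 1),
            (bcoef c p.1 r * bcoef c p.2 s) • ((PowerSeries.coeff r) f * (PowerSeries.coeff s) g) := by
      intro p hp
      have hp' := Finset.HasAntidiagonal.mem_antidiagonal.1 hp
      rw [coeff_shiftPS, coeff_shiftPS]
      rw [pad_sum (fun r => bcoef c p.1 r • (PowerSeries.coeff r) f) (show p.1 ≤ k by omega)
          (fun r h => by simp only [bcoef]; rw [if_neg (by omega), zero_smul])]
      rw [pad_sum (fun s => bcoef c p.2 s • (PowerSeries.coeff s) g) (show p.2 ≤ k by omega)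
          (fun s h => by simp only [bcoef]; rw [if_neg (by omega), zero_smul])]
      rw [Finset.sum_mul]
      apply Finset.sum_congr rfl
      intro r _
      rw [Finset.mul_sum]
      apply Finset.sum_congr rfl
      intro s _
      exact smul_mul_smul_comm _ _ _ _
    rw [Finset.sum_congr rfl step1]
    rw [Finset.sum_comm]
    apply Finset.sum_congr rfl
    intro r _
    rw [Finset.sum_comm]
    apply Finset.sum_congr rfl
    intro s _
    rw [← Finset.sum_smul, bcoef_conv]
  rw [rhs]

lemma shiftPS_add (c : K) (f g : PowerSeries A) :
    shiftPS K c (f + g) = shiftPS K c f + shiftPS K c g := by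
  ext k
  simp [coeff_shiftPS, smul_add, Finset.sum_add_distrib]

lemma shiftPS_one (c : K) : shiftPS K c (1 : PowerSeries A) = 1 := by
  ext k
  rw [coeff_shiftPS]
  rcases Nat.eq_zero_or_pos k with hk | hk
  · subst hk; simp [bcoef, scoef]
  · rw [Finset.sum_eq_zero, PowerSeries.coeff_one, if_neg (by omega)]
    intro r hr
    rcases Nat.eq_zero_or_pos r with hr0 | hr0
    · subst hr0
      rw [bcoef, if_pos (by omega), scoef, Nat.sub_zero, Nat.choose_eq_zero_of_lt (by omega)]
      simp
    · rw [PowerSeries.coeff_one, if_neg (by omega), smul_zero]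

-- new material
lemma coeff_scs (d : K) (r : ℕ) :
    (PowerSeries.coeff r) (scs d) = if r = 0 then 0 else (-d) ^ (r - 1) := by
  cases r with
  | zero => simp [scs]
  | succ r => rw [scs, PowerSeries.coeff_succ_X_mul]; simp [geo, PowerSeries.coeff_mk]

lemma shiftPS_scs (c d : K) : shiftPS K c (scs d) = scs (c + d) := by
  ext k
  rw [coeff_shiftPS]
  cases k with
  | zero => simp [coeff_scs, bcoef]
  | succ k =>
    rw [coeff_scs, if_neg (by omega)]
    rw [Finset.sum_range_succ']
    have h0 : bcoef c (k+1) 0 • (PowerSeries.coeff 0) (scs d) = 0 := by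
      rw [coeff_scs, if_pos rfl, smul_zero]
    rw [h0, add_zero]
    have hterm : ∀ j ∈ Finset.range (k+1),
        bcoef c (k+1) (j+1) • (PowerSeries.coeff (j+1)) (scs d)
          = ((-1:K)^k * ((k).choose j : K)) * (c ^ (k - j) * d ^ j) := by
      intro j hj
      have hj' := Finset.mem_range.1 hj
      rw [coeff_scs, if_neg (by omega)]
      simp only [bcoef, if_pos (show j+1 ≤ k+1 by omega), scoef, smul_eq_mul]
      rw [show k + 1 - (j + 1) = k - j by omega, show k + 1 - 1 = k by omega,
        show j + 1 - 1 = j by omega, neg_pow d]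
      rw [show ((k).choose (k - j) : K) = ((k).choose j : K) by
        norm_cast; rw [Nat.choose_symm (by omega)]]
      rw [show ((-1:K)^(k-j)) * (k.choose j : K) * c^(k-j) * ((-1:K)^j * d^j)
          = ((-1:K)^(k-j) * (-1:K)^j) * ((k.choose j : K)) * (c^(k-j) * d^j) by ring,
        ← pow_add, show k - j + j = k by omega]
    rw [Finset.sum_congr rfl hterm]
    have hfin : ((-(c+d)):K)^(k+1-1) = ∑ j ∈ Finset.range (k+1),
        (-1:K)^k * ((k).choose j : K) * (c^(k-j) * d^j) := by
      rw [show k+1-1 = k from rfl, show (-(c+d) : K) = -(d+c) by ring, neg_pow, add_pow,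
        Finset.mul_sum]
      apply Finset.sum_congr rfl
      intro j hj
      ring
    rw [hfin]

lemma shiftPS_pow (c : K) (f : PowerSeries A) (s : ℕ) :
    shiftPS K c (f ^ s) = (shiftPS K c f) ^ s := by
  induction s with
  | zero => simpa using shiftPS_one (A := A) c
  | succ s ih => rw [pow_succ, shiftPS_mul, ih, pow_succ]

lemma bcoef_comp (c d : K) (k s : ℕ) :
    ∑ r ∈ Finset.range (k + 1), bcoef c k r * bcoef d r s = bcoef (c + d) k s := by
  have h1 : ∀ r, (PowerSeries.coeff r) (scs d ^ s) = bcoef d r s := fun r => coeff_scs_pow d s r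
  have : ∑ r ∈ Finset.range (k + 1), bcoef c k r * bcoef d r s
      = (PowerSeries.coeff k) (shiftPS K c (scs d ^ s)) := by
    rw [coeff_shiftPS]
    apply Finset.sum_congr rfl
    intro r _
    rw [h1, smul_eq_mul]
  rw [this, shiftPS_pow, shiftPS_scs, coeff_scs_pow]

lemma shiftPS_comp (c d : K) (f : PowerSeries A) :
    shiftPS K c (shiftPS K d f) = shiftPS K (c + d) f := by
  ext k
  rw [coeff_shiftPS, coeff_shiftPS]
  have step : ∀ r ∈ Finset.range (k+1),
      bcoef c k r • (PowerSeries.coeff r) (shiftPS K d f)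
        = ∑ s ∈ Finset.range (k+1), (bcoef c k r * bcoef d r s) • (PowerSeries.coeff s) f := by
    intro r hr
    have hr' := Finset.mem_range.1 hr
    rw [coeff_shiftPS]
    rw [pad_sum (fun s => bcoef d r s • (PowerSeries.coeff s) f) (show r ≤ k by omega)
        (fun s hs => by simp only [bcoef]; rw [if_neg (by omega), zero_smul])]
    rw [Finset.smul_sum]
    apply Finset.sum_congr rfl
    intro s _
    rw [smul_smul]
  rw [Finset.sum_congr rfl step, Finset.sum_comm]
  apply Finset.sum_congr rfl
  intro s _
  rw [← Finset.sum_smul, bcoef_comp]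

-- Pascal recurrence for the shift-by-1 coefficients
lemma scoef_pascal (m j : ℕ) (hj : j ≤ m) :
    scoef (1 : K) (m + 1) (j + 1) = scoef 1 m j - bcoef 1 m (j + 1) := by
  rcases Nat.lt_or_ge j m with h | h
  · -- j < m
    obtain ⟨m', rfl⟩ : ∃ m', m = m' + 1 := ⟨m - 1, by omega⟩
    simp only [scoef, bcoef, if_pos (show j + 1 ≤ m' + 1 by omega), one_pow, mul_one]
    rw [show m' + 1 + 1 - (j + 1) = (m' - j) + 1 by omega,
      show m' + 1 + 1 - 1 = m' + 1 by omega,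
      show m' + 1 - j = (m' - j) + 1 by omega,
      show m' + 1 - 1 = m' by omega,
      show m' + 1 - (j + 1) = m' - j by omega]
    rw [Nat.choose_succ_succ (m') (m' - j)]
    push_cast
    ring
  · -- j = m
    have : j = m := by omega
    subst this
    simp only [scoef, bcoef, if_neg (show ¬ (j + 1 ≤ j) by omega)]
    rw [show j + 1 - (j + 1) = 0 by omega, show j - j = 0 by omega]
    simp

/-- the substituted sum `Φ(u, u+1)`'s `N`-th coefficient, for coefficient family `F` -/
noncomputable def subuv (F : ℕ → ℕ → A) (N : ℕ) : A :=
  ∑ p ∈ Finset.HasAntidiagonal.antidiagonal N, ∑ s ∈ Finset.range (p.2 + 1), scoef (1:K) p.2 s • F p.1 s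

lemma subuv_shift (F : ℕ → ℕ → A) (h0 : ∀ r, F r 0 = 0) (h0' : ∀ s, F 0 s = 0) (N : ℕ) :
    subuv (K := K) (fun r s => F (r + 1) s - F r (s + 1)) N = - subuv (K := K) F N := by
  classical
  have key1 : ∑ p ∈ Finset.HasAntidiagonal.antidiagonal N, ∑ s ∈ Finset.range (p.2 + 1), scoef (1:K) p.2 s • F (p.1 + 1) s
      = ∑ p ∈ Finset.HasAntidiagonal.antidiagonal N, ∑ s ∈ Finset.range (p.2 + 1 + 1), scoef (1:K) (p.2 + 1) s • F p.1 s := by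
    have e2 := Finset.Nat.sum_antidiagonal_succ' (n := N)
      (f := fun p => ∑ s ∈ Finset.range (p.2 + 1), scoef (1:K) p.2 s • F p.1 s)
    rw [Finset.Nat.sum_antidiagonal_succ (n := N)
      (f := fun p => ∑ s ∈ Finset.range (p.2 + 1), scoef (1:K) p.2 s • F p.1 s)] at e2
    simp only at e2
    have z1 : ∑ s ∈ Finset.range (N + 1 + 1), scoef (1:K) (N + 1) s • F 0 s = 0 := by
      apply Finset.sum_eq_zero; intro s _; rw [h0', smul_zero]
    have z2 : ∑ s ∈ Finset.range (0 + 1), scoef (1:K) 0 s • F (N + 1) s = 0 := by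
      rw [Finset.sum_range_one, h0, smul_zero]
    rw [z1, zero_add, z2, zero_add] at e2
    exact e2
  simp only [subuv, smul_sub, Finset.sum_sub_distrib]
  rw [key1, ← Finset.sum_neg_distrib, sub_eq_iff_eq_add]
  have main : ∀ p ∈ Finset.HasAntidiagonal.antidiagonal N,
      ∑ s ∈ Finset.range (p.2 + 1 + 1), scoef (1:K) (p.2 + 1) s • F p.1 s
        = - ∑ s ∈ Finset.range (p.2 + 1), scoef (1:K) p.2 s • F p.1 s
          + ∑ s ∈ Finset.range (p.2 + 1), scoef (1:K) p.2 s • F p.1 (s + 1) := by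
    intro p _
    obtain ⟨r, m⟩ := p
    simp only
    rw [Finset.sum_range_succ' (fun s => scoef (1:K) (m+1) s • F r s) (m+1)]
    rw [h0 r, smul_zero, add_zero]
    have pas : ∀ j ∈ Finset.range (m + 1),
        scoef (1:K) (m + 1) (j + 1) • F r (j + 1)
          = scoef (1:K) m j • F r (j + 1) - bcoef (1:K) m (j + 1) • F r (j + 1) := by
      intro j hj
      have hj' := Finset.mem_range.1 hj
      rw [scoef_pascal (K := K) m j (by omega), sub_smul]
    rw [Finset.sum_congr rfl pas, Finset.sum_sub_distrib]
    have e3 : ∑ j ∈ Finset.range (m + 1), bcoef (1:K) m (j + 1) • F r (j + 1)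
        = ∑ j ∈ Finset.range (m + 1), scoef (1:K) m j • F r j := by
      rw [Finset.sum_range_succ (fun j => bcoef (1:K) m (j+1) • F r (j+1)) m]
      rw [show bcoef (1:K) m (m+1) = 0 by simp only [bcoef]; rw [if_neg (by omega)], zero_smul,
        add_zero]
      rw [Finset.sum_range_succ' (fun j => scoef (1:K) m j • F r j) m]
      rw [h0 r, smul_zero, add_zero]
      apply Finset.sum_congr rfl
      intro j hj
      have hj' := Finset.mem_range.1 hj
      simp only [bcoef]; rw [if_pos (by omega)]
    rw [e3]
    abel
  rw [Finset.sum_congr rfl main, Finset.sum_add_distrib]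


variable {n : ℕ}

noncomputable def Xse (T : Fin n → Fin n → ℕ → A) (i j : Fin n) : PowerSeries A :=
  PowerSeries.mk (T i j)

-- coefficients of products with a shift-by-1 factor
lemma coeff_mul_shift1 (f g : PowerSeries A) (N : ℕ) :
    (PowerSeries.coeff N) (f * shiftPS K 1 g)
      = subuv (K := K) (fun r s => (PowerSeries.coeff r) f * (PowerSeries.coeff s) g) N := by
  rw [PowerSeries.coeff_mul, subuv]
  apply Finset.sum_congr rfl
  intro p _
  rw [coeff_shiftPS, Finset.mul_sum]
  apply Finset.sum_congr rfl
  intro s hs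
  have hs' := Finset.mem_range.1 hs
  rw [mul_smul_comm]
  simp only [bcoef]
  rw [if_pos (by omega)]

lemma coeff_shift1_mul (g f : PowerSeries A) (N : ℕ) :
    (PowerSeries.coeff N) (shiftPS K 1 g * f)
      = subuv (K := K) (fun r s => (PowerSeries.coeff s) g * (PowerSeries.coeff r) f) N := by
  rw [PowerSeries.coeff_mul,
    ← Finset.Nat.sum_antidiagonal_swap
      (f := fun p => (PowerSeries.coeff p.1) (shiftPS K 1 g) * (PowerSeries.coeff p.2) f),
    subuv]
  simp only [Prod.fst_swap, Prod.snd_swap]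
  apply Finset.sum_congr rfl
  intro p _
  rw [coeff_shiftPS, Finset.sum_mul]
  apply Finset.sum_congr rfl
  intro s hs
  have hs' := Finset.mem_range.1 hs
  rw [smul_mul_assoc]
  simp only [bcoef]
  rw [if_pos (by omega)]

lemma base_rel {T : Fin n → Fin n → ℕ → A} (hT : RTTrel T) (i j k l : Fin n) :
    Xse T i j * shiftPS K 1 (Xse T k l) - shiftPS K 1 (Xse T k l) * Xse T i j
      = Xse T k j * shiftPS K 1 (Xse T i l) - shiftPS K 1 (Xse T k j) * Xse T i l := by
  ext N
  simp only [map_sub, coeff_mul_shift1, coeff_shift1_mul]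
  simp only [Xse, PowerSeries.coeff_mk]
  have hC : ∀ x : A, (if i = j then (1:A) else 0) * x = x * (if i = j then (1:A) else 0) := by
    intro x; split <;> simp
  -- combine into subuv of commutators / of the RHS family
  have lhs_eq : subuv (K := K) (fun r s => T i j r * T k l s) N
        - subuv (K := K) (fun r s => T k l s * T i j r) N
      = subuv (K := K) (fun r s => T i j r * T k l s - T k l s * T i j r) N := by
    simp [subuv, smul_sub, Finset.sum_sub_distrib]
  have rhs_eq : subuv (K := K) (fun r s => T k j r * T i l s) N
        - subuv (K := K) (fun r s => T k j s * T i l r) N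
      = subuv (K := K) (fun r s => T k j r * T i l s - T k j s * T i l r) N := by
    simp [subuv, smul_sub, Finset.sum_sub_distrib]
  rw [lhs_eq, rhs_eq]
  -- now apply subuv_shift to the commutator family
  have hF0 : ∀ r, T i j r * T k l 0 - T k l 0 * T i j r = 0 := by
    intro r
    rw [hT.1 k l]
    split <;> simp
  have hF0' : ∀ s, T i j 0 * T k l s - T k l s * T i j 0 = 0 := by
    intro s
    rw [hT.1 i j]
    split <;> simp
  have hmain := subuv_shift (K := K)
    (fun r s => T i j r * T k l s - T k l s * T i j r) hF0 hF0' N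
  have hrw : (fun r s => (T i j (r+1) * T k l s - T k l s * T i j (r+1))
        - (T i j r * T k l (s+1) - T k l (s+1) * T i j r))
      = fun r s => -(T k j r * T i l s - T k j s * T i l r) := by
    funext r s
    have h5 := hT.2 i j k l r s
    rw [← h5, neg_sub]
  rw [hrw] at hmain
  have hneg : subuv (K := K) (fun r s => -(T k j r * T i l s - T k j s * T i l r)) N
      = - subuv (K := K) (fun r s => T k j r * T i l s - T k j s * T i l r) N := by
    rw [subuv, subuv, ← Finset.sum_neg_distrib]
    apply Finset.sum_congr rfl
    intro p _
    rw [← Finset.sum_neg_distrib]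
    apply Finset.sum_congr rfl
    intro s _
    rw [smul_neg]
  rw [hneg] at hmain
  have := neg_injective hmain
  exact this.symm

lemma base4 {T : Fin n → Fin n → ℕ → A} (hT : RTTrel T) (x y c d : Fin n) :
    Xse T x d * shiftPS K 1 (Xse T y c) + Xse T x c * shiftPS K 1 (Xse T y d)
      = Xse T y d * shiftPS K 1 (Xse T x c) + Xse T y c * shiftPS K 1 (Xse T x d) := by
  have h1 := base_rel (K := K) hT x d y c
  have h2 := base_rel (K := K) hT x c y d
  set a1 := Xse T x d * shiftPS K 1 (Xse T y c)
  set a2 := shiftPS K 1 (Xse T y c) * Xse T x d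
  set b1 := Xse T x c * shiftPS K 1 (Xse T y d)
  set b2 := shiftPS K 1 (Xse T y d) * Xse T x c
  set c1 := Xse T y d * shiftPS K 1 (Xse T x c)
  set d1 := Xse T y c * shiftPS K 1 (Xse T x d)
  have h3 : (a1 - a2) + (b1 - b2) = (c1 - b2) + (d1 - a2) := by rw [h1, h2]
  calc a1 + b1 = ((a1 - a2) + (b1 - b2)) + (a2 + b2) := by abel
    _ = ((c1 - b2) + (d1 - a2)) + (a2 + b2) := by rw [h3]
    _ = c1 + d1 := by abel

lemma key4 {T : Fin n → Fin n → ℕ → A} (hT : RTTrel T) (x y c d : Fin n) (p : ℕ) :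
    shiftPS K (p : K) (Xse T x d) * shiftPS K ((p : K) + 1) (Xse T y c)
        + shiftPS K (p : K) (Xse T x c) * shiftPS K ((p : K) + 1) (Xse T y d)
      = shiftPS K (p : K) (Xse T y d) * shiftPS K ((p : K) + 1) (Xse T x c)
        + shiftPS K (p : K) (Xse T y c) * shiftPS K ((p : K) + 1) (Xse T x d) := by
  have h := congrArg (shiftPS K (p : K)) (base4 (K := K) hT x y c d)
  rw [shiftPS_add, shiftPS_add, shiftPS_mul, shiftPS_mul, shiftPS_mul, shiftPS_mul,
    shiftPS_comp, shiftPS_comp, shiftPS_comp, shiftPS_comp] at h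
  exact h



variable {m : ℕ}

noncomputable def Pprod (K : Type*) [Field K] {A : Type*} [Ring A] [Algebra K A] {n m : ℕ}
    (T : Fin n → Fin n → ℕ → A) (a b : Fin m → Fin n) (σ : Equiv.Perm (Fin m)) :
    PowerSeries A :=
  ((List.finRange m).map
    fun (p : Fin m) => shiftPS K (((p : ℕ) : K)) (Xse T (a (σ p)) (b p))).prod

lemma qminor_eq (T : Fin n → Fin n → ℕ → A) (a b : Fin m → Fin n) :
    qminor K T a b = ∑ σ : Equiv.Perm (Fin m), (Equiv.Perm.sign σ : ℤ) • Pprod K T a b σ := rfl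

lemma map_take_congr (i : ℕ) (F G : Fin m → PowerSeries A)
    (h : ∀ q : Fin m, (q : ℕ) < i → F q = G q) :
    ((List.finRange m).take i).map F = ((List.finRange m).take i).map G := by
  apply List.map_congr_left
  intro q hq
  rw [List.mem_iff_getElem] at hq
  obtain ⟨t, ht, rfl⟩ := hq
  have ht' : t < i := by
    have := ht
    simp only [List.length_take, List.length_finRange] at this
    omega
  apply h
  rw [List.getElem_take, List.getElem_finRange]
  exact ht'

lemma map_drop_congr (i : ℕ) (F G : Fin m → PowerSeries A)
    (h : ∀ q : Fin m, i ≤ (q : ℕ) → F q = G q) :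
    ((List.finRange m).drop i).map F = ((List.finRange m).drop i).map G := by
  apply List.map_congr_left
  intro q hq
  rw [List.mem_iff_getElem] at hq
  obtain ⟨t, ht, rfl⟩ := hq
  apply h
  rw [List.getElem_drop, List.getElem_finRange]
  simp

lemma prod_split (i j : Fin m) (hij : (i : ℕ) + 1 = (j : ℕ)) (F : Fin m → PowerSeries A) :
    ((List.finRange m).map F).prod
      = (((List.finRange m).take (i : ℕ)).map F).prod
          * (F i * (F j * ((((List.finRange m).drop ((i : ℕ) + 2)).map F).prod))) := by
  have h1 : (i : ℕ) < (List.finRange m).length := by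
    rw [List.length_finRange]; exact i.isLt
  have h2 : (i : ℕ) + 1 < (List.finRange m).length := by
    rw [List.length_finRange]; omega
  conv_lhs => rw [← List.take_append_drop (i : ℕ) (List.finRange m)]
  rw [List.drop_eq_getElem_cons h1, List.drop_eq_getElem_cons h2]
  rw [List.getElem_finRange, List.getElem_finRange]
  have e1 : (Fin.cast (List.length_finRange (n := m)) ⟨(i:ℕ), h1⟩) = i := by
    apply Fin.ext; simp
  have e2 : (Fin.cast (List.length_finRange (n := m)) ⟨(i:ℕ)+1, h2⟩) = j := by
    apply Fin.ext; simp [hij]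
  rw [e1, e2]
  rw [List.map_append, List.map_cons, List.map_cons, List.prod_append, List.prod_cons,
    List.prod_cons]

set_option maxHeartbeats 1000000 in
lemma inner_vanish {T : Fin n → Fin n → ℕ → A} (hT : RTTrel T)
    (a b : Fin m → Fin n) (i j : Fin m) (hij : (i : ℕ) + 1 = (j : ℕ))
    (σ : Equiv.Perm (Fin m)) :
    Pprod K T a (b ∘ Equiv.swap i j) σ + Pprod K T a b σ
      = Pprod K T a (b ∘ Equiv.swap i j) (σ * Equiv.swap i j)
          + Pprod K T a b (σ * Equiv.swap i j) := by
  classical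
  have hne : i ≠ j := by
    intro h; rw [h] at hij; omega
  -- the four factor functions
  set τ := Equiv.swap i j with hτ
  set b' := b ∘ Equiv.swap i j with hb'
  set F1 : Fin m → PowerSeries A :=
    fun p => shiftPS K ((p : ℕ) : K) (Xse T (a (σ p)) (b' p)) with hF1
  set F2 : Fin m → PowerSeries A :=
    fun p => shiftPS K ((p : ℕ) : K) (Xse T (a (σ p)) (b p)) with hF2
  set F3 : Fin m → PowerSeries A :=
    fun p => shiftPS K ((p : ℕ) : K) (Xse T (a ((σ * τ) p)) (b' p)) with hF3
  set F4 : Fin m → PowerSeries A :=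
    fun p => shiftPS K ((p : ℕ) : K) (Xse T (a ((σ * τ) p)) (b p)) with hF4
  have hP1 : Pprod K T a b' σ = ((List.finRange m).map F1).prod := rfl
  have hP2 : Pprod K T a b σ = ((List.finRange m).map F2).prod := rfl
  have hP3 : Pprod K T a b' (σ * τ) = ((List.finRange m).map F3).prod := rfl
  have hP4 : Pprod K T a b (σ * τ) = ((List.finRange m).map F4).prod := rfl
  rw [hP1, hP2, hP3, hP4, prod_split i j hij F1, prod_split i j hij F2,
    prod_split i j hij F3, prod_split i j hij F4]
  -- away from i, j all four functions agree
  have hoff : ∀ q : Fin m, q ≠ i → q ≠ j → (F1 q = F2 q ∧ F3 q = F2 q ∧ F4 q = F2 q) := by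
    intro q h1 h2
    have hbq : b' q = b q := by
      rw [hb']; simp only [Function.comp_apply, Equiv.swap_apply_of_ne_of_ne h1 h2]
    have hsq : (σ * τ) q = σ q := by
      rw [hτ]; simp only [Equiv.Perm.mul_apply, Equiv.swap_apply_of_ne_of_ne h1 h2]
    constructor
    · rw [hF1, hF2]; simp only [hbq]
    constructor
    · rw [hF3, hF2]; simp only [hbq, hsq]
    · rw [hF4, hF2]; simp only [hsq]
  have hlt : ∀ q : Fin m, (q : ℕ) < (i : ℕ) → q ≠ i ∧ q ≠ j := by
    intro q hq
    constructor <;> (intro h; rw [h] at hq; omega)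
  have hgt : ∀ q : Fin m, (i : ℕ) + 2 ≤ (q : ℕ) → q ≠ i ∧ q ≠ j := by
    intro q hq
    constructor <;> (intro h; rw [h] at hq; omega)
  have ht1 : ((List.finRange m).take (i:ℕ)).map F1 = ((List.finRange m).take (i:ℕ)).map F2 :=
    map_take_congr _ _ _ (fun q hq => ((hoff q (hlt q hq).1 (hlt q hq).2).1))
  have ht3 : ((List.finRange m).take (i:ℕ)).map F3 = ((List.finRange m).take (i:ℕ)).map F2 :=
    map_take_congr _ _ _ (fun q hq => ((hoff q (hlt q hq).1 (hlt q hq).2).2.1))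
  have ht4 : ((List.finRange m).take (i:ℕ)).map F4 = ((List.finRange m).take (i:ℕ)).map F2 :=
    map_take_congr _ _ _ (fun q hq => ((hoff q (hlt q hq).1 (hlt q hq).2).2.2))
  have hd1 : ((List.finRange m).drop ((i:ℕ)+2)).map F1 = ((List.finRange m).drop ((i:ℕ)+2)).map F2 :=
    map_drop_congr _ _ _ (fun q hq => ((hoff q (hgt q hq).1 (hgt q hq).2).1))
  have hd3 : ((List.finRange m).drop ((i:ℕ)+2)).map F3 = ((List.finRange m).drop ((i:ℕ)+2)).map F2 :=
    map_drop_congr _ _ _ (fun q hq => ((hoff q (hgt q hq).1 (hgt q hq).2).2.1))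
  have hd4 : ((List.finRange m).drop ((i:ℕ)+2)).map F4 = ((List.finRange m).drop ((i:ℕ)+2)).map F2 :=
    map_drop_congr _ _ _ (fun q hq => ((hoff q (hgt q hq).1 (hgt q hq).2).2.2))
  rw [ht1, ht3, ht4, hd1, hd3, hd4]
  set L := (((List.finRange m).take (i:ℕ)).map F2).prod with hL
  set R := (((List.finRange m).drop ((i:ℕ)+2)).map F2).prod with hR
  -- middle values
  have hτi : τ i = j := Equiv.swap_apply_left i j
  have hτj : τ j = i := Equiv.swap_apply_right i j
  have hbi : b' i = b j := by rw [hb']; simp [hτi]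
  have hbj : b' j = b i := by rw [hb']; simp [hτj]
  have hsi : (σ * τ) i = σ j := by simp [hτ, Equiv.Perm.mul_apply]
  have hsj : (σ * τ) j = σ i := by simp [hτ, Equiv.Perm.mul_apply]
  have hjK : ((j : ℕ) : K) = ((i : ℕ) : K) + 1 := by
    rw [← hij]; push_cast; ring
  have hkey := key4 (K := K) hT (a (σ i)) (a (σ j)) (b i) (b j) (i : ℕ)
  rw [← hjK] at hkey
  have hm1 : F1 i = shiftPS K ((i:ℕ) : K) (Xse T (a (σ i)) (b j)) := by
    rw [hF1]; simp only [hbi]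
  have hm1' : F1 j = shiftPS K ((j:ℕ) : K) (Xse T (a (σ j)) (b i)) := by
    rw [hF1]; simp only [hbj]
  have hm2 : F2 i = shiftPS K ((i:ℕ) : K) (Xse T (a (σ i)) (b i)) := rfl
  have hm2' : F2 j = shiftPS K ((j:ℕ) : K) (Xse T (a (σ j)) (b j)) := rfl
  have hm3 : F3 i = shiftPS K ((i:ℕ) : K) (Xse T (a (σ j)) (b j)) := by rw [hF3]; simp only [hsi, hbi]
  have hm3' : F3 j = shiftPS K ((j:ℕ) : K) (Xse T (a (σ i)) (b i)) := by rw [hF3]; simp only [hsj, hbj]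
  have hm4 : F4 i = shiftPS K ((i:ℕ) : K) (Xse T (a (σ j)) (b i)) := by rw [hF4]; simp only [hsi]
  have hm4' : F4 j = shiftPS K ((j:ℕ) : K) (Xse T (a (σ i)) (b j)) := by rw [hF4]; simp only [hsj]
  rw [hm1, hm1', hm2, hm2', hm3, hm3', hm4, hm4']
  rw [← mul_add L, ← mul_add L]
  congr 1
  simp only [← mul_assoc]
  rw [← add_mul, ← add_mul, hkey]

lemma qminor_col_adj {T : Fin n → Fin n → ℕ → A} (hT : RTTrel T) (a : Fin m → Fin n)
    (i j : Fin m) (hij : (i : ℕ) + 1 = (j : ℕ)) (b : Fin m → Fin n) :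
    qminor K T a (b ∘ Equiv.swap i j) = - qminor K T a b := by
  classical
  have hne : i ≠ j := fun h => by rw [h] at hij; omega
  rw [eq_neg_iff_add_eq_zero, qminor_eq, qminor_eq, ← Finset.sum_add_distrib]
  apply Finset.sum_involution (g := fun σ _ => σ * Equiv.swap i j)
  · intro σ _
    have hsg : ((Equiv.Perm.sign (σ * Equiv.swap i j) : ℤˣ) : ℤ)
        = -((Equiv.Perm.sign σ : ℤˣ) : ℤ) := by
      rw [map_mul, Equiv.Perm.sign_swap hne]
      simp
    have hiv := inner_vanish (K := K) hT a b i j hij σ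
    rw [hsg, neg_smul, neg_smul, ← neg_add, ← smul_add, ← smul_add, hiv, add_neg_cancel]
  · intro σ _ _ heq
    have h1 : Equiv.swap i j = 1 := mul_left_cancel (a := σ) (by rw [mul_one]; exact heq)
    have h2 : j = i := by
      have := congrArg (fun e : Equiv.Perm (Fin m) => e i) h1
      simpa using this
    exact hne h2.symm
  · intro σ _; exact Finset.mem_univ _
  · intro σ _; rw [mul_assoc, Equiv.swap_mul_self, mul_one]

lemma qminor_col_swap {T : Fin n → Fin n → ℕ → A} (hT : RTTrel T) (a : Fin m → Fin n) :
    ∀ (d : ℕ) (i j : Fin m), (i : ℕ) < (j : ℕ) → (j : ℕ) - (i : ℕ) ≤ d →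
      ∀ b : Fin m → Fin n, qminor K T a (b ∘ Equiv.swap i j) = - qminor K T a b := by
  intro d
  induction d with
  | zero => intro i j h1 h2; omega
  | succ d ih =>
    intro i j h1 h2 b
    rcases Nat.lt_or_ge ((i : ℕ) + 1) (j : ℕ) with hlt | hge
    · -- non adjacent
      set j' : Fin m := ⟨(j : ℕ) - 1, by omega⟩ with hj'
      have hj'v : (j' : ℕ) = (j : ℕ) - 1 := rfl
      have hadj : (j' : ℕ) + 1 = (j : ℕ) := by omega
      have hne1 : j' ≠ j := fun h => by rw [h] at hadj; omega
      have hni : i ≠ j' := fun h => by rw [← h] at hj'v; omega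
      have hnij : i ≠ j := fun h => by rw [h] at h1; omega
      set s1 := Equiv.swap j' j with hs1
      have hdecomp : Equiv.swap i j = s1 * Equiv.swap i j' * s1⁻¹ := by
        rw [hs1, ← Equiv.swap_apply_apply]
        congr 1
        · rw [Equiv.swap_apply_of_ne_of_ne hni hnij]
        · rw [Equiv.swap_apply_left]
      have hcomp : b ∘ ⇑(Equiv.swap i j) = ((b ∘ ⇑s1) ∘ ⇑(Equiv.swap i j')) ∘ ⇑s1 := by
        rw [hdecomp]
        funext q
        simp [Equiv.Perm.mul_apply, hs1, Equiv.swap_inv]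
      rw [hcomp]
      rw [qminor_col_adj (K := K) hT a j' j hadj]
      rw [ih i j' (by omega) (by omega)]
      rw [qminor_col_adj (K := K) hT a j' j hadj]
      rw [neg_neg]
    · -- adjacent
      have : (i : ℕ) + 1 = (j : ℕ) := by omega
      exact qminor_col_adj (K := K) hT a i j this b

lemma qminor_col_swap' {T : Fin n → Fin n → ℕ → A} (hT : RTTrel T) (a : Fin m → Fin n)
    (i j : Fin m) (hne : i ≠ j) (b : Fin m → Fin n) :
    qminor K T a (b ∘ Equiv.swap i j) = - qminor K T a b := by
  rcases Nat.lt_or_ge (i : ℕ) (j : ℕ) with h | h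
  · exact qminor_col_swap (K := K) hT a ((j : ℕ) - (i : ℕ)) i j h le_rfl b
  · have h2 : (j : ℕ) < (i : ℕ) := by
      rcases Nat.lt_or_ge (j : ℕ) (i : ℕ) with h' | h'
      · exact h'
      · exact absurd (Fin.ext (by omega)) hne
    rw [Equiv.swap_comm]
    exact qminor_col_swap (K := K) hT a ((i : ℕ) - (j : ℕ)) j i h2 le_rfl b

lemma qminor_col {T : Fin n → Fin n → ℕ → A} (hT : RTTrel T) (a : Fin m → Fin n)
    (ρ : Equiv.Perm (Fin m)) :
    ∀ b : Fin m → Fin n,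
      qminor K T a (b ∘ ρ) = ((Equiv.Perm.sign ρ : ℤˣ) : ℤ) • qminor K T a b := by
  refine Equiv.Perm.swap_induction_on ρ ?_ ?_
  · intro b
    simp
  · intro f x y hxy ih
    intro b
    have hcomp : b ∘ ⇑(Equiv.swap x y * f) = (b ∘ ⇑(Equiv.swap x y)) ∘ ⇑f := by
      funext q; simp [Equiv.Perm.mul_apply]
    rw [hcomp, ih, qminor_col_swap' (K := K) hT a x y hxy b]
    rw [map_mul, Equiv.Perm.sign_swap hxy]
    simp [Units.val_mul, mul_smul]

lemma qminor_row (T : Fin n → Fin n → ℕ → A) (a b : Fin m → Fin n) (ρ : Equiv.Perm (Fin m)) :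
    qminor K T (a ∘ ρ) b = ((Equiv.Perm.sign ρ : ℤˣ) : ℤ) • qminor K T a b := by
  classical
  have hsq : ((Equiv.Perm.sign ρ : ℤˣ) : ℤ) * ((Equiv.Perm.sign ρ : ℤˣ) : ℤ) = 1 := by
    rw [← Units.val_mul, Int.units_mul_self, Units.val_one]
  have e1 : qminor K T (a ∘ ρ) b
      = ∑ σ : Equiv.Perm (Fin m), ((Equiv.Perm.sign σ : ℤˣ) : ℤ) • Pprod K T a b (ρ * σ) := by
    rw [qminor_eq]
    apply Finset.sum_congr rfl
    intro σ _
    rfl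
  rw [e1]
  rw [Fintype.sum_equiv (Equiv.mulLeft ρ)
    (fun σ => ((Equiv.Perm.sign σ : ℤˣ) : ℤ) • Pprod K T a b (ρ * σ))
    (fun τ => ((Equiv.Perm.sign ρ : ℤˣ) : ℤ) • (((Equiv.Perm.sign τ : ℤˣ) : ℤ) • Pprod K T a b τ))
    (by
      intro σ
      simp only [Equiv.coe_mulLeft]
      rw [map_mul, Units.val_mul, smul_smul]
      rw [← mul_assoc, hsq, one_mul])]
  rw [← Finset.smul_sum, ← qminor_eq]


end QMaux

/-- under the RTT relations, quantum minors are antisymmetric in their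
row indices and in their column indices. -/
theorem qminor_antisymmetric
    {K : Type*} [Field K] [CharZero K] {A : Type*} [Ring A] [Algebra K A]
    {n : ℕ} (hn : 2 ≤ n) (T : Fin n → Fin n → ℕ → A) (hT : RTTrel T)
    {m : ℕ} (hm : 1 ≤ m) (a b : Fin m → Fin n) (ρ : Equiv.Perm (Fin m)) :
    qminor K T (a ∘ ρ) b = (Equiv.Perm.sign ρ : ℤ) • qminor K T a b ∧
    qminor K T a (b ∘ ρ) = (Equiv.Perm.sign ρ : ℤ) • qminor K T a b := by
  exact ⟨QMaux.qminor_row T a b ρ, QMaux.qminor_col hT a ρ b⟩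
end

section
/- Under the RTT relations, quantum minors are alternating: for any m ≥ 1 and index tuples a = (a_1,…,a_m), b = (b_1,…,b_m) in {1,…,n}, if there exist indices i ≠ j with a_i = a_j, or indices i ≠ j with b_i = b_j, then t(a_1,…,a_m; b_1,…,b_m)(u) = 0. -/
set_option maxHeartbeats 1000000

open PowerSeries Finset

section Aux
variable {K : Type*} [Field K] {A : Type*} [Ring A] [Algebra K A]

/-- `G c = (1 + cX)⁻¹ = ∑ (-c)^m X^m` in `K⟦X⟧`. -/
noncomputable def Gser (K : Type*) [Field K] (c : K) : PowerSeries K :=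
  PowerSeries.mk fun m => (-c) ^ m

/-- `Y c = X (1 + cX)⁻¹`. -/
noncomputable def Yser (K : Type*) [Field K] (c : K) : PowerSeries K :=
  PowerSeries.X * Gser K c

/-- Substitution of `Y ∈ K⟦X⟧` (with zero constant term) into `f ∈ A⟦X⟧`. -/
noncomputable def PhiY (Y : PowerSeries K) (f : PowerSeries A) : PowerSeries A :=
  PowerSeries.mk fun k => ∑ r ∈ Finset.range (k + 1),
    (PowerSeries.coeff k (Y ^ r)) • PowerSeries.coeff r f

lemma coeff_PhiY (Y : PowerSeries K) (f : PowerSeries A) (k : ℕ) :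
    PowerSeries.coeff k (PhiY Y f) = ∑ r ∈ Finset.range (k + 1),
      (PowerSeries.coeff k (Y ^ r)) • PowerSeries.coeff r f := by
  simp [PhiY]

lemma hockey (r n : ℕ) : ∑ i ∈ range (n + 1), (r + i).choose i = (r + n + 1).choose n := by
  induction n with
  | zero => simp
  | succ n ih =>
    rw [Finset.sum_range_succ, ih]
    exact (Nat.choose_succ_succ (r + n + 1) n).symm

lemma coeff_G_pow (c : K) (r n : ℕ) :
    PowerSeries.coeff n ((Gser K c) ^ (r + 1)) = (-c) ^ n * ((r + n).choose n : K) := by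
  induction r generalizing n with
  | zero => simp [Gser]
  | succ r ih =>
    rw [pow_succ, PowerSeries.coeff_mul]
    have : ∀ p ∈ Finset.HasAntidiagonal.antidiagonal n,
        PowerSeries.coeff p.1 ((Gser K c) ^ (r+1)) * PowerSeries.coeff p.2 (Gser K c)
        = (-c) ^ n * ((r + p.1).choose p.1 : K) := by
      rintro ⟨i, j⟩ hp
      rw [Finset.HasAntidiagonal.mem_antidiagonal] at hp
      rw [ih, show (PowerSeries.coeff (i,j).2 (Gser K c)) = (-c)^j from by simp [Gser], ← hp]
      rw [pow_add]
      ring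
    rw [Finset.sum_congr rfl this, ← Finset.mul_sum,
      Finset.Nat.sum_antidiagonal_eq_sum_range_succ_mk]
    simp only [← Nat.cast_sum]
    rw [hockey]
    ring_nf

lemma X_dvd_Yser (c : K) : (PowerSeries.X : PowerSeries K) ∣ Yser K c :=
  Dvd.intro _ rfl

lemma constantCoeff_Yser (c : K) : PowerSeries.constantCoeff (Yser K c) = 0 := by
  simp [Yser]

lemma coeff_Y_pow_of_lt {c : K} {k r : ℕ} (h : k < r) :
    PowerSeries.coeff k ((Yser K c) ^ r) = 0 := by
  have hdvd : (PowerSeries.X : PowerSeries K) ^ r ∣ (Yser K c) ^ r :=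
    pow_dvd_pow_of_dvd (X_dvd_Yser c) r
  obtain ⟨g, hg⟩ := hdvd
  rw [hg, PowerSeries.coeff_X_pow_mul' g r k, if_neg (by omega)]

lemma coeff_Y_pow_zero (c : K) (k : ℕ) :
    PowerSeries.coeff k ((Yser K c) ^ 0) = if k = 0 then 1 else 0 := by
  simp [PowerSeries.coeff_one]

lemma coeff_Y_pow_of_le {c : K} {k r : ℕ} (hr : 1 ≤ r) (h : r ≤ k) :
    PowerSeries.coeff k ((Yser K c) ^ r)
      = (-c) ^ (k - r) * ((k - 1).choose (k - r) : K) := by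
  obtain ⟨r, rfl⟩ := Nat.exists_eq_add_of_le hr
  rw [Yser, mul_pow, show k = (k - (1 + r)) + (1 + r) by omega, PowerSeries.coeff_X_pow_mul]
  rw [show (1 + r) = r + 1 by omega, coeff_G_pow]
  congr 3 <;> omega

/-- The key relation `(1 + cX) * G c = 1`. -/
lemma one_add_mul_G (c : K) :
    (1 + c • (PowerSeries.X : PowerSeries K)) * Gser K c = 1 := by
  have : (1 + c • (PowerSeries.X : PowerSeries K)) * Gser K c
      = Gser K c + c • (PowerSeries.X * Gser K c) := by
    rw [add_mul, one_mul, smul_mul_assoc]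
  rw [this]
  ext n
  cases n with
  | zero => simp [Gser]
  | succ n =>
    rw [map_add, PowerSeries.coeff_smul, PowerSeries.coeff_succ_X_mul]
    simp [Gser, PowerSeries.coeff_one, pow_succ]
    ring

/-- Recurrence: `coeff u (Y^t) - coeff (u+1) (Y^(t+1)) = coeff u (Y^(t+1))` for `Y = Y 1`. -/
lemma coeff_Y1_rec (u t : ℕ) :
    PowerSeries.coeff u ((Yser K 1) ^ t) - PowerSeries.coeff (u+1) ((Yser K 1) ^ (t+1))
      = PowerSeries.coeff u ((Yser K 1) ^ (t+1)) := by
  have hXG : PowerSeries.X * Gser K 1 = 1 - Gser K 1 := by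
    have h := one_add_mul_G (1 : K)
    have h2 : Gser K 1 + PowerSeries.X * Gser K 1 = 1 := by
      rw [← h, add_mul, one_mul, one_smul]
    linear_combination h2
  have hcoeff : PowerSeries.coeff (u+1) ((Yser K 1) ^ (t+1))
      = PowerSeries.coeff u (Gser K 1 * (Yser K 1) ^ t) := by
    rw [show (Yser K 1) ^ (t+1) = PowerSeries.X * (Gser K 1 * (Yser K 1) ^ t) by
      rw [pow_succ, Yser]; ring, PowerSeries.coeff_succ_X_mul]
  have hser : (Yser K 1) ^ (t+1) = (Yser K 1) ^ t - Gser K 1 * (Yser K 1) ^ t := by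
    have h0 : (Yser K 1) ^ (t+1) = (Yser K 1) ^ t * (PowerSeries.X * Gser K 1) := by
      rw [pow_succ]; rfl
    rw [h0, hXG]; ring
  rw [hcoeff, hser, map_sub]

lemma sum_triangle {M : Type*} [AddCommMonoid M] (k : ℕ) (F : ℕ → ℕ → M)
    (hF : ∀ a b, k < a + b → F a b = 0) :
    ∑ r ∈ range (k+1), ∑ p ∈ Finset.HasAntidiagonal.antidiagonal r, F p.1 p.2
      = ∑ a ∈ range (k+1), ∑ b ∈ range (k+1), F a b := by
  have hset : (range (k+1)).biUnion (fun r => Finset.HasAntidiagonal.antidiagonal r)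
      = (range (k+1) ×ˢ range (k+1)).filter (fun p => p.1 + p.2 ≤ k) := by
    ext ⟨a, b⟩
    simp only [Finset.mem_biUnion, Finset.HasAntidiagonal.mem_antidiagonal, Finset.mem_filter,
      Finset.mem_product, Finset.mem_range]
    constructor
    · rintro ⟨r, hr, rfl⟩; omega
    · rintro ⟨⟨ha, hb⟩, hab⟩; exact ⟨a + b, by omega, rfl⟩
  have hdisj : ∀ r ∈ range (k+1), ∀ r' ∈ range (k+1), r ≠ r' →
      Disjoint (Finset.HasAntidiagonal.antidiagonal r) (Finset.HasAntidiagonal.antidiagonal r') := by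
    intro r _ r' _ hrr'
    rw [Finset.disjoint_left]
    rintro ⟨a, b⟩ h1 h2
    rw [Finset.HasAntidiagonal.mem_antidiagonal] at h1 h2
    omega
  rw [← Finset.sum_biUnion hdisj, hset]
  rw [Finset.sum_filter]
  rw [Finset.sum_product]
  apply Finset.sum_congr rfl; intro a _
  apply Finset.sum_congr rfl; intro b _
  by_cases h : a + b ≤ k
  · rw [if_pos h]
  · rw [if_neg h, hF a b (by omega)]

lemma coeff_pow_eq_zero_of_lt {Y : PowerSeries K} (hY : PowerSeries.constantCoeff Y = 0)
    {k r : ℕ} (h : k < r) : PowerSeries.coeff k (Y ^ r) = 0 := by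
  obtain ⟨g, hg⟩ := pow_dvd_pow_of_dvd (PowerSeries.X_dvd_iff.mpr hY) r
  rw [hg, PowerSeries.coeff_X_pow_mul' g r k, if_neg (by omega)]

lemma PhiY_mul (Y : PowerSeries K) (hY : PowerSeries.constantCoeff Y = 0)
    (f g : PowerSeries A) : PhiY Y (f * g) = PhiY Y f * PhiY Y g := by
  ext k
  have hcoe : ∀ a b : ℕ, k < a + b →
      (PowerSeries.coeff k (Y ^ (a+b))) •
        (PowerSeries.coeff a f * PowerSeries.coeff b g) = 0 := by
    intro a b h; rw [coeff_pow_eq_zero_of_lt hY h, zero_smul]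
  have hL : PowerSeries.coeff k (PhiY Y (f * g))
      = ∑ a ∈ range (k+1), ∑ b ∈ range (k+1),
          (PowerSeries.coeff k (Y ^ (a+b))) •
            (PowerSeries.coeff a f * PowerSeries.coeff b g) := by
    rw [coeff_PhiY]
    have hstep : ∀ r ∈ range (k+1),
        (PowerSeries.coeff k (Y ^ r)) • PowerSeries.coeff r (f * g)
        = ∑ p ∈ Finset.HasAntidiagonal.antidiagonal r,
            (PowerSeries.coeff k (Y ^ (p.1 + p.2))) •
              (PowerSeries.coeff p.1 f * PowerSeries.coeff p.2 g) := by
      intro r _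
      rw [PowerSeries.coeff_mul, Finset.smul_sum]
      apply Finset.sum_congr rfl
      rintro ⟨a, b⟩ hp
      rw [Finset.HasAntidiagonal.mem_antidiagonal] at hp
      simp only
      rw [hp]
    rw [Finset.sum_congr rfl hstep]
    exact sum_triangle k _ hcoe
  have hext : ∀ (p : ℕ) (h : PowerSeries A), p ≤ k →
      (∑ a ∈ range (p+1), (PowerSeries.coeff p (Y ^ a)) • PowerSeries.coeff a h)
      = ∑ a ∈ range (k+1), (PowerSeries.coeff p (Y ^ a)) • PowerSeries.coeff a h := by
    intro p h hp
    apply Finset.sum_subset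
    · exact Finset.range_subset_range.mpr (by omega)
    · intro a ha hna
      rw [Finset.mem_range] at ha hna
      rw [coeff_pow_eq_zero_of_lt hY (by omega), zero_smul]
  have hR : PowerSeries.coeff k (PhiY Y f * PhiY Y g)
      = ∑ a ∈ range (k+1), ∑ b ∈ range (k+1),
          (PowerSeries.coeff k (Y ^ (a+b))) •
            (PowerSeries.coeff a f * PowerSeries.coeff b g) := by
    rw [PowerSeries.coeff_mul]
    have hstep : ∀ p ∈ Finset.HasAntidiagonal.antidiagonal k,
        PowerSeries.coeff p.1 (PhiY Y f) * PowerSeries.coeff p.2 (PhiY Y g)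
        = ∑ a ∈ range (k+1), ∑ b ∈ range (k+1),
            (PowerSeries.coeff p.1 (Y ^ a) * PowerSeries.coeff p.2 (Y ^ b)) •
              (PowerSeries.coeff a f * PowerSeries.coeff b g) := by
      rintro ⟨p, q⟩ hp
      rw [Finset.HasAntidiagonal.mem_antidiagonal] at hp
      simp only
      rw [coeff_PhiY, coeff_PhiY, hext p f (by omega), hext q g (by omega),
        Finset.sum_mul_sum]
      apply Finset.sum_congr rfl; intro a _
      apply Finset.sum_congr rfl; intro b _
      rw [smul_mul_smul_comm]
    rw [Finset.sum_congr rfl hstep, Finset.sum_comm]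
    apply Finset.sum_congr rfl; intro a _
    rw [Finset.sum_comm]
    apply Finset.sum_congr rfl; intro b _
    rw [← Finset.sum_smul, ← PowerSeries.coeff_mul, ← pow_add]
  rw [hL, hR]

lemma PhiY_one (Y : PowerSeries K) : PhiY Y (1 : PowerSeries A) = 1 := by
  ext k
  rw [coeff_PhiY]
  rw [Finset.sum_eq_single 0]
  · simp [PowerSeries.coeff_one]
  · intro r _ hr
    rw [PowerSeries.coeff_one, if_neg hr, smul_zero]
  · intro h; simp at h

lemma PhiY_add (Y : PowerSeries K) (f g : PowerSeries A) :
    PhiY Y (f + g) = PhiY Y f + PhiY Y g := by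
  ext k
  simp [coeff_PhiY, smul_add, Finset.sum_add_distrib]

lemma PhiY_smul (Y : PowerSeries K) (c : K) (f : PowerSeries A) :
    PhiY Y (c • f) = c • PhiY Y f := by
  ext k
  simp only [coeff_PhiY, PowerSeries.coeff_smul, Finset.smul_sum]
  apply Finset.sum_congr rfl; intro r _
  rw [smul_comm]

lemma PhiY_X (Y : PowerSeries K) (hY : PowerSeries.constantCoeff Y = 0) :
    PhiY Y (PowerSeries.X : PowerSeries K) = Y := by
  ext k
  rw [coeff_PhiY]
  rcases Nat.eq_zero_or_pos k with hk | hk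
  · subst hk
    rw [show (0:ℕ)+1 = 1 from rfl, range_one, Finset.sum_singleton, pow_zero,
      PowerSeries.coeff_X, if_neg (by omega), smul_zero,
      PowerSeries.coeff_zero_eq_constantCoeff, hY]
  · rw [Finset.sum_eq_single 1]
    · simp [PowerSeries.coeff_X]
    · intro r _ hr
      rw [PowerSeries.coeff_X, if_neg hr, smul_zero]
    · intro h; rw [Finset.mem_range] at h; omega

lemma PhiY_pow (Y : PowerSeries K) (hY : PowerSeries.constantCoeff Y = 0)
    (f : PowerSeries A) (r : ℕ) : PhiY Y (f ^ r) = (PhiY Y f) ^ r := by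
  induction r with
  | zero => simpa using PhiY_one Y
  | succ r ih => rw [pow_succ, PhiY_mul Y hY, ih, pow_succ]

/-- Composition law for `PhiY`. -/
lemma PhiY_comp (Y Z : PowerSeries K) (hY : PowerSeries.constantCoeff Y = 0)
    (hZ : PowerSeries.constantCoeff Z = 0) (f : PowerSeries A) :
    PhiY Y (PhiY Z f) = PhiY (PhiY Y Z) f := by
  ext k
  rw [coeff_PhiY, coeff_PhiY]
  have hstep : ∀ s ∈ range (k+1),
      (PowerSeries.coeff k (Y ^ s)) • PowerSeries.coeff s (PhiY Z f)
      = ∑ r ∈ range (k+1),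
          (PowerSeries.coeff k (Y ^ s) * PowerSeries.coeff s (Z ^ r)) •
            PowerSeries.coeff r f := by
    intro s hs
    rw [Finset.mem_range] at hs
    rw [coeff_PhiY]
    have hext : (∑ r ∈ range (s+1),
        (PowerSeries.coeff s (Z ^ r)) • PowerSeries.coeff r f)
        = ∑ r ∈ range (k+1), (PowerSeries.coeff s (Z ^ r)) • PowerSeries.coeff r f := by
      apply Finset.sum_subset (Finset.range_subset_range.mpr (by omega))
      intro r hr hnr
      rw [Finset.mem_range] at hr hnr
      rw [coeff_pow_eq_zero_of_lt hZ (by omega), zero_smul]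
    rw [hext, Finset.smul_sum]
    apply Finset.sum_congr rfl; intro r _
    rw [smul_smul]
  rw [Finset.sum_congr rfl hstep, Finset.sum_comm]
  apply Finset.sum_congr rfl; intro r _
  rw [← Finset.sum_smul]
  congr 1
  have : ∑ s ∈ range (k+1), PowerSeries.coeff k (Y ^ s) * PowerSeries.coeff s (Z ^ r)
      = PowerSeries.coeff k (PhiY Y (Z ^ r)) := by
    rw [coeff_PhiY]
    apply Finset.sum_congr rfl; intro s _
    rw [smul_eq_mul]
  rw [this, PhiY_pow Y hY]

lemma shiftPS_eq_PhiY (c : K) (f : PowerSeries A) :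
    shiftPS K c f = PhiY (Yser K c) f := by
  ext k
  rw [shiftPS, PowerSeries.coeff_mk, coeff_PhiY]
  apply Finset.sum_congr rfl
  intro r hr
  rw [Finset.mem_range] at hr
  congr 1
  rcases Nat.eq_zero_or_pos r with h0 | h0
  · subst h0
    rw [coeff_Y_pow_zero]
    rcases Nat.eq_zero_or_pos k with hk | hk
    · subst hk; simp
    · rw [if_neg (by omega), Nat.sub_zero, Nat.choose_eq_zero_of_lt (by omega)]
      simp
  · rw [coeff_Y_pow_of_le h0 (by omega), neg_pow]
    ring

lemma shiftPS_add (c : K) (f g : PowerSeries A) :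
    shiftPS K c (f + g) = shiftPS K c f + shiftPS K c g := by
  rw [shiftPS_eq_PhiY, shiftPS_eq_PhiY, shiftPS_eq_PhiY, PhiY_add]

lemma shiftPS_mul (c : K) (f g : PowerSeries A) :
    shiftPS K c (f * g) = shiftPS K c f * shiftPS K c g := by
  rw [shiftPS_eq_PhiY, shiftPS_eq_PhiY, shiftPS_eq_PhiY, PhiY_mul _ (constantCoeff_Yser c)]

lemma one_add_smul_X_mul_Y (e : K) :
    (1 + e • (PowerSeries.X : PowerSeries K)) * Yser K e = PowerSeries.X := by
  rw [Yser, ← mul_assoc, mul_comm (1 + e • (PowerSeries.X : PowerSeries K)) PowerSeries.X,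
    mul_assoc, one_add_mul_G, mul_one]

lemma Yser_comp (c d : K) : PhiY (Yser K c) (Yser K d) = Yser K (c + d) := by
  have hG := one_add_mul_G c
  have h1 : (1 + d • Yser K c)
      = (1 + (c + d) • (PowerSeries.X : PowerSeries K)) * Gser K c := by
    rw [show Yser K c = PowerSeries.X * Gser K c from rfl]
    simp only [smul_eq_C_mul, map_add] at hG ⊢
    linear_combination -hG
  have hY : (1 + d • Yser K c) * Yser K (c + d) = Yser K c := by
    rw [h1]
    have hA := one_add_smul_X_mul_Y (c + d)
    have hB : Yser K c = PowerSeries.X * Gser K c := rfl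
    simp only [smul_eq_C_mul] at hA ⊢
    linear_combination (Gser K c) * hA - hB
  have hy : (1 + d • Yser K c) * PhiY (Yser K c) (Yser K d) = Yser K c := by
    have he := congrArg (PhiY (Yser K c)) (one_add_smul_X_mul_Y d)
    rw [PhiY_mul _ (constantCoeff_Yser c), PhiY_add, PhiY_one, PhiY_smul,
      PhiY_X _ (constantCoeff_Yser c)] at he
    exact he
  have hne : (1 + d • Yser K c) ≠ 0 := by
    intro h0
    have := congrArg PowerSeries.constantCoeff h0
    rw [map_add, map_one, PowerSeries.constantCoeff_smul, constantCoeff_Yser] at this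
    simp at this
  exact mul_left_cancel₀ hne (hy.trans hY.symm)

lemma shiftPS_shiftPS (c d : K) (f : PowerSeries A) :
    shiftPS K c (shiftPS K d f) = shiftPS K (c + d) f := by
  rw [shiftPS_eq_PhiY, shiftPS_eq_PhiY, shiftPS_eq_PhiY,
    PhiY_comp _ _ (constantCoeff_Yser c) (constantCoeff_Yser d), Yser_comp]

/-- Evaluation of a double series `H(u,v)` at `v = u + 1`. -/
noncomputable def ev2 (K : Type*) [Field K] {A : Type*} [Ring A] [Algebra K A]
    (H : ℕ → ℕ → A) : PowerSeries A :=
  PowerSeries.mk fun N => ∑ pq ∈ Finset.HasAntidiagonal.antidiagonal N, ∑ s ∈ range (N+1),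
    (PowerSeries.coeff pq.2 ((Yser K 1) ^ s)) • H pq.1 s

lemma ev2_mul (X Y : ℕ → A) :
    PowerSeries.mk X * PhiY (Yser K 1) (PowerSeries.mk Y)
      = ev2 K (fun r s => X r * Y s) := by
  ext N
  rw [PowerSeries.coeff_mul, ev2, PowerSeries.coeff_mk]
  apply Finset.sum_congr rfl
  rintro ⟨q, t⟩ hpq
  rw [Finset.HasAntidiagonal.mem_antidiagonal] at hpq
  simp only [PowerSeries.coeff_mk]
  rw [coeff_PhiY]
  have hext : (∑ s ∈ range (t+1),
        (PowerSeries.coeff t ((Yser K 1) ^ s)) • (PowerSeries.coeff s (PowerSeries.mk Y)))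
      = ∑ s ∈ range (N+1),
        (PowerSeries.coeff t ((Yser K 1) ^ s)) • (PowerSeries.coeff s (PowerSeries.mk Y)) := by
    apply Finset.sum_subset (Finset.range_subset_range.mpr (by omega))
    intro s hs hns
    rw [Finset.mem_range] at hs hns
    rw [coeff_pow_eq_zero_of_lt (constantCoeff_Yser 1) (by omega), zero_smul]
  rw [hext, Finset.mul_sum]
  apply Finset.sum_congr rfl; intro s _
  rw [PowerSeries.coeff_mk, mul_smul_comm]

lemma ev2_sub (H1 H2 : ℕ → ℕ → A) :
    ev2 K (fun r s => H1 r s - H2 r s) = ev2 K H1 - ev2 K H2 := by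
  ext N
  simp [ev2, smul_sub, Finset.sum_sub_distrib]

lemma ev2_key (H : ℕ → ℕ → A) (h0 : ∀ s, H 0 s = 0) (h0' : ∀ r, H r 0 = 0) :
    ev2 K (fun r s => H r (s+1)) - ev2 K (fun r s => H (r+1) s) = ev2 K H := by
  ext N
  rw [map_sub]
  simp only [ev2, PowerSeries.coeff_mk]
  have hT2 : (∑ pq ∈ Finset.HasAntidiagonal.antidiagonal N, ∑ s ∈ range (N+1),
        (PowerSeries.coeff pq.2 ((Yser K 1) ^ s)) • H (pq.1+1) s)
      = ∑ pq ∈ Finset.HasAntidiagonal.antidiagonal N, ∑ s ∈ range (N+1),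
        (PowerSeries.coeff (pq.2+1) ((Yser K 1) ^ s)) • H pq.1 s := by
    have e1 := Finset.Nat.sum_antidiagonal_succ (n := N)
      (f := fun pq : ℕ × ℕ => ∑ s ∈ range (N+1),
        (PowerSeries.coeff pq.2 ((Yser K 1) ^ s)) • H pq.1 s)
    have e2 := Finset.Nat.sum_antidiagonal_succ' (n := N)
      (f := fun pq : ℕ × ℕ => ∑ s ∈ range (N+1),
        (PowerSeries.coeff pq.2 ((Yser K 1) ^ s)) • H pq.1 s)
    simp only at e1 e2
    have hz1 : (∑ s ∈ range (N+1),
        (PowerSeries.coeff (N+1) ((Yser K 1) ^ s)) • H 0 s) = 0 := by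
      apply Finset.sum_eq_zero; intro s _; rw [h0, smul_zero]
    have hz2 : (∑ s ∈ range (N+1),
        (PowerSeries.coeff 0 ((Yser K 1) ^ s)) • H (N+1) s) = 0 := by
      apply Finset.sum_eq_zero; intro s _
      rcases Nat.eq_zero_or_pos s with rfl | hs
      · rw [h0', smul_zero]
      · rw [coeff_pow_eq_zero_of_lt (constantCoeff_Yser 1) (by omega), zero_smul]
    rw [hz1, zero_add] at e1
    rw [hz2, zero_add] at e2
    rw [← e1, e2]
  rw [hT2, ← Finset.sum_sub_distrib, ← sub_eq_zero, ← Finset.sum_sub_distrib]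
  apply Finset.sum_eq_zero
  rintro ⟨q, t⟩ hpq
  rw [Finset.HasAntidiagonal.mem_antidiagonal] at hpq
  simp only
  have hs1 : (∑ s ∈ range (N+1), (PowerSeries.coeff t ((Yser K 1) ^ s)) • H q (s+1))
      = ∑ s ∈ range N, (PowerSeries.coeff t ((Yser K 1) ^ s)) • H q (s+1) := by
    rw [Finset.sum_range_succ]
    rcases Nat.eq_zero_or_pos q with rfl | hq
    · rw [h0, smul_zero, add_zero]
    · rw [coeff_pow_eq_zero_of_lt (constantCoeff_Yser 1) (by omega), zero_smul, add_zero]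
  have hs2 : (∑ s ∈ range (N+1), (PowerSeries.coeff (t+1) ((Yser K 1) ^ s)) • H q s)
      = ∑ s ∈ range N, (PowerSeries.coeff (t+1) ((Yser K 1) ^ (s+1))) • H q (s+1) := by
    rw [Finset.sum_range_succ']
    rw [h0', smul_zero, add_zero]
  have hs3 : (∑ s ∈ range (N+1), (PowerSeries.coeff t ((Yser K 1) ^ s)) • H q s)
      = ∑ s ∈ range N, (PowerSeries.coeff t ((Yser K 1) ^ (s+1))) • H q (s+1) := by
    rw [Finset.sum_range_succ']
    rw [h0', smul_zero, add_zero]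
  rw [hs1, hs2, hs3, ← Finset.sum_sub_distrib, ← Finset.sum_sub_distrib]
  apply Finset.sum_eq_zero
  intro s _
  rw [← sub_smul, ← sub_smul]
  have hrec := coeff_Y1_rec (K := K) t s
  rw [show PowerSeries.coeff t ((Yser K 1) ^ s)
      - PowerSeries.coeff (t+1) ((Yser K 1) ^ (s+1))
      - PowerSeries.coeff t ((Yser K 1) ^ (s+1))
      = (PowerSeries.coeff t ((Yser K 1) ^ s)
        - PowerSeries.coeff (t+1) ((Yser K 1) ^ (s+1)))
        - PowerSeries.coeff t ((Yser K 1) ^ (s+1)) from by ring, hrec, sub_self, zero_smul]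

lemma ev2_add (H1 H2 : ℕ → ℕ → A) :
    ev2 K (fun r s => H1 r s + H2 r s) = ev2 K H1 + ev2 K H2 := by
  ext N
  simp [ev2, smul_add, Finset.sum_add_distrib]

lemma ev2_congr {H1 H2 : ℕ → ℕ → A} (h : ∀ r s, H1 r s = H2 r s) :
    ev2 K H1 = ev2 K H2 :=
  congrArg (ev2 K) (funext fun r => funext fun s => h r s)

section RTT

variable {n : ℕ} {T : Fin n → Fin n → ℕ → A} (hT : RTTrel T)
include hT

lemma sym_rel_zero (i j k l : Fin n) :
    PowerSeries.mk (T i k) * shiftPS K 1 (PowerSeries.mk (T j l))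
      + PowerSeries.mk (T i l) * shiftPS K 1 (PowerSeries.mk (T j k))
    = PowerSeries.mk (T j k) * shiftPS K 1 (PowerSeries.mk (T i l))
      + PowerSeries.mk (T j l) * shiftPS K 1 (PowerSeries.mk (T i k)) := by
  rw [show (1 : K) = ((1 : K)) from rfl]
  rw [shiftPS_eq_PhiY, shiftPS_eq_PhiY, shiftPS_eq_PhiY, shiftPS_eq_PhiY]
  rw [ev2_mul, ev2_mul, ev2_mul, ev2_mul]
  have hC0 : ∀ s, ((T i k 0 * T j l s - T j l s * T i k 0)
      + (T i l 0 * T j k s - T j k s * T i l 0)) = 0 := by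
    intro s
    rw [hT.1, hT.1]
    split_ifs <;> simp
  have hC0' : ∀ r, ((T i k r * T j l 0 - T j l 0 * T i k r)
      + (T i l r * T j k 0 - T j k 0 * T i l r)) = 0 := by
    intro r
    rw [hT.1, hT.1]
    split_ifs <;> simp
  have hkey := ev2_key (K := K)
    (fun r s => (T i k r * T j l s - T j l s * T i k r)
      + (T i l r * T j k s - T j k s * T i l r)) hC0 hC0'
  have hRTT : ∀ r s : ℕ,
      ((T i k r * T j l (s+1) - T j l (s+1) * T i k r)
        + (T i l r * T j k (s+1) - T j k (s+1) * T i l r))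
      - ((T i k (r+1) * T j l s - T j l s * T i k (r+1))
        + (T i l (r+1) * T j k s - T j k s * T i l (r+1)))
      = (T j k r * T i l s - T j k s * T i l r)
        + (T j l r * T i k s - T j l s * T i k r) := by
    intro r s
    have e1 := hT.2 i k j l r s
    have e2 := hT.2 i l j k r s
    rw [← sub_eq_zero]
    have h3 : ((T i k r * T j l (s+1) - T j l (s+1) * T i k r)
        + (T i l r * T j k (s+1) - T j k (s+1) * T i l r))
      - ((T i k (r+1) * T j l s - T j l s * T i k (r+1))
        + (T i l (r+1) * T j k s - T j k s * T i l (r+1)))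
      - ((T j k r * T i l s - T j k s * T i l r)
        + (T j l r * T i k s - T j l s * T i k r))
      = (((T i k r * T j l (s+1) - T j l (s+1) * T i k r)
          - (T i k (r+1) * T j l s - T j l s * T i k (r+1)))
          - (T j k r * T i l s - T j k s * T i l r))
        + (((T i l r * T j k (s+1) - T j k (s+1) * T i l r)
          - (T i l (r+1) * T j k s - T j k s * T i l (r+1)))
          - (T j l r * T i k s - T j l s * T i k r)) := by
      abel
    rw [h3, e1, e2]
    simp
  have h5 : ev2 K (fun r s => ((T i k r * T j l (s+1) - T j l (s+1) * T i k r)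
        + (T i l r * T j k (s+1) - T j k (s+1) * T i l r))
      - ((T i k (r+1) * T j l s - T j l s * T i k (r+1))
        + (T i l (r+1) * T j k s - T j k s * T i l (r+1))))
      = ev2 K (fun r s => (T j k r * T i l s - T j k s * T i l r)
        + (T j l r * T i k s - T j l s * T i k r)) :=
    ev2_congr hRTT
  rw [ev2_sub] at h5
  beta_reduce at hkey
  rw [hkey] at h5
  calc ev2 K (fun r s => T i k r * T j l s) + ev2 K (fun r s => T i l r * T j k s)
      = ev2 K (fun r s => T i k r * T j l s + T i l r * T j k s) := (ev2_add _ _).symm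
    _ = ev2 K (fun r s => ((T i k r * T j l s - T j l s * T i k r)
          + (T i l r * T j k s - T j k s * T i l r))
          + (T j l s * T i k r + T j k s * T i l r)) := ev2_congr (by intro r s; abel)
    _ = ev2 K (fun r s => (T i k r * T j l s - T j l s * T i k r)
          + (T i l r * T j k s - T j k s * T i l r))
        + ev2 K (fun r s => T j l s * T i k r + T j k s * T i l r) := ev2_add _ _
    _ = ev2 K (fun r s => (T j k r * T i l s - T j k s * T i l r)
          + (T j l r * T i k s - T j l s * T i k r))
        + ev2 K (fun r s => T j l s * T i k r + T j k s * T i l r) := by rw [h5]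
    _ = ev2 K (fun r s => ((T j k r * T i l s - T j k s * T i l r)
          + (T j l r * T i k s - T j l s * T i k r))
          + (T j l s * T i k r + T j k s * T i l r)) := (ev2_add _ _).symm
    _ = ev2 K (fun r s => T j k r * T i l s + T j l r * T i k s) := ev2_congr (by intro r s; abel)
    _ = ev2 K (fun r s => T j k r * T i l s) + ev2 K (fun r s => T j l r * T i k s) := ev2_add _ _

lemma sym_rel_shift (i j k l : Fin n) (c : K) :
    shiftPS K c (PowerSeries.mk (T i k)) * shiftPS K (c+1) (PowerSeries.mk (T j l))
      + shiftPS K c (PowerSeries.mk (T i l)) * shiftPS K (c+1) (PowerSeries.mk (T j k))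
    = shiftPS K c (PowerSeries.mk (T j k)) * shiftPS K (c+1) (PowerSeries.mk (T i l))
      + shiftPS K c (PowerSeries.mk (T j l)) * shiftPS K (c+1) (PowerSeries.mk (T i k)) := by
  have h := congrArg (shiftPS K c) (sym_rel_zero (K := K) hT i j k l)
  simp only [shiftPS_add, shiftPS_mul, shiftPS_shiftPS] at h
  exact h

lemma M_symm (i j k l : Fin n) (c : K) :
    shiftPS K c (PowerSeries.mk (T i k)) * shiftPS K (c+1) (PowerSeries.mk (T j l))
      - shiftPS K c (PowerSeries.mk (T j l)) * shiftPS K (c+1) (PowerSeries.mk (T i k))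
    = shiftPS K c (PowerSeries.mk (T j k)) * shiftPS K (c+1) (PowerSeries.mk (T i l))
      - shiftPS K c (PowerSeries.mk (T i l)) * shiftPS K (c+1) (PowerSeries.mk (T j k)) := by
  rw [sub_eq_sub_iff_add_eq_add]
  have h := sym_rel_shift (K := K) hT i j k l c
  linear_combination (norm := abel) h

end RTT

lemma map_take_congr {R : Type*} {m p : ℕ} (f g : Fin m → R)
    (h : ∀ q : Fin m, (q : ℕ) < p → f q = g q) :
    ((List.finRange m).take p).map f = ((List.finRange m).take p).map g := by
  apply List.ext_getElem (by simp)
  intro i h1 h2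
  simp only [List.getElem_map, List.getElem_take]
  rw [h]
  have := h1
  simp only [List.length_map, List.length_take, List.length_finRange] at this
  simp only [List.getElem_finRange, Fin.coe_cast]
  omega

lemma map_drop_congr {R : Type*} {m p : ℕ} (f g : Fin m → R)
    (h : ∀ q : Fin m, p ≤ (q : ℕ) → f q = g q) :
    ((List.finRange m).drop p).map f = ((List.finRange m).drop p).map g := by
  apply List.ext_getElem (by simp)
  intro i h1 h2
  simp only [List.getElem_map, List.getElem_drop]
  rw [h]
  simp only [List.getElem_finRange, Fin.coe_cast]
  omega

lemma finRange_prod_split {R : Type*} [Monoid R] {m p : ℕ} (hp : p + 1 < m) (f : Fin m → R) :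
    ((List.finRange m).map f).prod
      = (((List.finRange m).take p).map f).prod
        * (f ⟨p, by omega⟩ * (f ⟨p+1, hp⟩
        * (((List.finRange m).drop (p+2)).map f).prod)) := by
  have hlen : (List.finRange m).length = m := List.length_finRange (n := m)
  have h1 : (List.finRange m).drop p
      = (⟨p, by omega⟩ : Fin m) :: (List.finRange m).drop (p+1) := by
    rw [List.drop_eq_getElem_cons (by omega)]
    congr 1
    simp
  have h2 : (List.finRange m).drop (p+1)
      = (⟨p+1, hp⟩ : Fin m) :: (List.finRange m).drop (p+2) := by
    rw [List.drop_eq_getElem_cons (by omega)]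
    congr 1
    simp
  conv_lhs => rw [← List.take_append_drop p (List.finRange m)]
  rw [List.map_append, List.prod_append, h1, h2, List.map_cons, List.map_cons,
    List.prod_cons, List.prod_cons]

lemma eq_zero_of_self_eq_neg {K : Type*} [Field K] [CharZero K] {M : Type*}
    [AddCommGroup M] [Module K M] {x : M} (h : x = -x) : x = 0 := by
  have h2 : (2 : K) • x = 0 := by
    rw [two_smul]
    exact add_eq_zero_iff_eq_neg.mpr h
  have h3 := congrArg (fun y => ((2 : K)⁻¹) • y) h2
  simpa [smul_smul, inv_mul_cancel₀ (two_ne_zero (α := K))] using h3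

lemma prod_mid_sub {R : Type*} [Ring R] (X Y A B C D E F G H : R)
    (h : A * B - C * D = E * F - G * H) :
    X * (A * (B * Y)) - X * (C * (D * Y)) = X * (E * (F * Y)) - X * (G * (H * Y)) := by
  have h1 : X * (A * (B * Y)) - X * (C * (D * Y)) = X * ((A*B - C*D) * Y) := by noncomm_ring
  have h2 : X * (E * (F * Y)) - X * (G * (H * Y)) = X * ((E*F - G*H) * Y) := by noncomm_ring
  rw [h1, h2, h]

section Minor

variable [CharZero K] {n : ℕ} {T : Fin n → Fin n → ℕ → A} {m : ℕ} (a b : Fin m → Fin n)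

/-- Row swap: a repeated row index kills the minor (no RTT needed). -/
lemma qminor_row_repeat {i j : Fin m} (hij : i ≠ j) (ha : a i = a j) :
    qminor K T a b = 0 := by
  apply eq_zero_of_self_eq_neg (K := K)
  set τ := Equiv.swap i j with hτ
  have hacomp : ∀ x : Fin m, a (τ x) = a x := by
    intro x
    by_cases hx : x = i
    · rw [hx, hτ, Equiv.swap_apply_left, ha]
    · by_cases hx' : x = j
      · rw [hx', hτ, Equiv.swap_apply_right, ha]
      · rw [hτ, Equiv.swap_apply_of_ne_of_ne hx hx']
  have hsign : ∀ σ : Equiv.Perm (Fin m),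
      ((Equiv.Perm.sign (τ * σ) : ℤ)) = -(Equiv.Perm.sign σ : ℤ) := by
    intro σ
    rw [map_mul, Equiv.Perm.sign_swap hij]
    push_cast
    ring
  calc qminor K T a b
      = ∑ σ : Equiv.Perm (Fin m), (Equiv.Perm.sign (τ * σ) : ℤ) •
          ((List.finRange m).map
            fun (p : Fin m) => shiftPS K (((p : ℕ) : K))
              (PowerSeries.mk fun k => T (a ((τ * σ) p)) (b p) k)).prod := by
        rw [qminor]
        exact (Equiv.sum_comp (Equiv.mulLeft τ) _).symm
    _ = ∑ σ : Equiv.Perm (Fin m), -((Equiv.Perm.sign σ : ℤ) •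
          ((List.finRange m).map
            fun (p : Fin m) => shiftPS K (((p : ℕ) : K))
              (PowerSeries.mk fun k => T (a (σ p)) (b p) k)).prod) := by
        apply Finset.sum_congr rfl
        intro σ _
        rw [hsign, neg_smul]
        congr 2
        apply congrArg List.prod
        apply List.map_congr_left
        intro x _
        have : a ((τ * σ) x) = a (σ x) := hacomp (σ x)
        rw [this]
    _ = -qminor K T a b := by rw [qminor, Finset.sum_neg_distrib]
  

lemma qminor_swap_adjacent (hT : RTTrel T) {p q : Fin m} (hpq : (q : ℕ) = (p : ℕ) + 1) :
    qminor K T a (b ∘ (Equiv.swap p q)) = - qminor K T a b := by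
  set s := Equiv.swap p q with hs
  have hne : p ≠ q := by
    intro h; rw [h] at hpq; omega
  have hss : ∀ σ : Equiv.Perm (Fin m), (σ * s) * s = σ := by
    intro σ; rw [mul_assoc, hs, Equiv.swap_mul_self, mul_one]
  have hsign : ∀ σ : Equiv.Perm (Fin m),
      ((Equiv.Perm.sign (σ * s) : ℤ)) = -(Equiv.Perm.sign σ : ℤ) := by
    intro σ; rw [map_mul, hs, Equiv.Perm.sign_swap hne]; push_cast; ring
  set F : Fin m → Fin n → Fin n → PowerSeries A :=
    fun x i k => shiftPS K ((x:ℕ):K) (PowerSeries.mk fun t => T i k t) with hF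
  set P : (Fin m → Fin n) → Equiv.Perm (Fin m) → PowerSeries A :=
    fun c σ => ((List.finRange m).map (fun x => F x (a (σ x)) (c x))).prod with hP
  have hqm : ∀ c : Fin m → Fin n, qminor K T a c
      = ∑ σ : Equiv.Perm (Fin m), (Equiv.Perm.sign σ : ℤ) • P c σ := by
    intro c; simp only [qminor, hP, hF]
  have hm2 : (p:ℕ) + 1 < m := by
    have := q.isLt; omega
  have hsplit : ∀ f : Fin m → PowerSeries A,
      ((List.finRange m).map f).prod
        = (((List.finRange m).take (p:ℕ)).map f).prod
          * (f p * (f q * (((List.finRange m).drop ((p:ℕ)+2)).map f).prod)) := by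
    intro f
    have h0 := finRange_prod_split (R := PowerSeries A) (m := m) (p := (p:ℕ)) hm2 f
    have e1 : (⟨(p:ℕ), by omega⟩ : Fin m) = p := Fin.ext rfl
    have e2 : (⟨(p:ℕ)+1, hm2⟩ : Fin m) = q := Fin.ext (by simp only [Fin.val_mk]; omega)
    rw [h0, e1, e2]
  have hcq : (((q:ℕ):K)) = ((p:ℕ):K) + 1 := by
    rw [hpq]; push_cast; ring
  have hD : ∀ σ : Equiv.Perm (Fin m),
      P b (σ * s) - P (b ∘ s) ((σ * s) * s) = P b σ - P (b ∘ s) (σ * s) := by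
    intro σ
    rw [hss]
    have htake : ∀ (c c' : Fin m → Fin n) (σ' σ'' : Equiv.Perm (Fin m)),
        (∀ x : Fin m, x ≠ p → x ≠ q → a (σ' x) = a (σ'' x) ∧ c x = c' x) →
        ((List.finRange m).take (p:ℕ)).map (fun x => F x (a (σ' x)) (c x))
          = ((List.finRange m).take (p:ℕ)).map (fun x => F x (a (σ'' x)) (c' x)) := by
      intro c c' σ' σ'' hx
      apply map_take_congr
      intro x hxp
      have h1 : x ≠ p := by intro h; subst h; omega
      have h2 : x ≠ q := by intro h; subst h; omega
      rw [(hx x h1 h2).1, (hx x h1 h2).2]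
    have hdrop : ∀ (c c' : Fin m → Fin n) (σ' σ'' : Equiv.Perm (Fin m)),
        (∀ x : Fin m, x ≠ p → x ≠ q → a (σ' x) = a (σ'' x) ∧ c x = c' x) →
        ((List.finRange m).drop ((p:ℕ)+2)).map (fun x => F x (a (σ' x)) (c x))
          = ((List.finRange m).drop ((p:ℕ)+2)).map (fun x => F x (a (σ'' x)) (c' x)) := by
      intro c c' σ' σ'' hx
      apply map_drop_congr
      intro x hxp
      have h1 : x ≠ p := by intro h; subst h; omega
      have h2 : x ≠ q := by intro h; subst h; omega
      rw [(hx x h1 h2).1, (hx x h1 h2).2]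
    have hoff : ∀ x : Fin m, x ≠ p → x ≠ q → s x = x := by
      intro x h1 h2; rw [hs]; exact Equiv.swap_apply_of_ne_of_ne h1 h2
    have hcong : ∀ x : Fin m, x ≠ p → x ≠ q →
        (a ((σ * s) x) = a (σ x) ∧ b x = (b ∘ s) x) := by
      intro x h1 h2
      constructor
      · show a (σ (s x)) = a (σ x); rw [hoff x h1 h2]
      · show b x = b (s x); rw [hoff x h1 h2]
    have hsp : s p = q := by rw [hs]; exact Equiv.swap_apply_left p q
    have hsq : s q = p := by rw [hs]; exact Equiv.swap_apply_right p q
    rw [hP]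
    simp only
    rw [hsplit (fun x => F x (a ((σ * s) x)) (b x)),
      hsplit (fun x => F x (a (σ x)) ((b ∘ s) x)),
      hsplit (fun x => F x (a (σ x)) (b x)),
      hsplit (fun x => F x (a ((σ * s) x)) ((b ∘ s) x))]
    rw [← htake b (b ∘ s) σ σ (fun x h1 h2 => ⟨rfl, (hcong x h1 h2).2⟩),
      ← hdrop b (b ∘ s) σ σ (fun x h1 h2 => ⟨rfl, (hcong x h1 h2).2⟩)]
    rw [← htake b (b ∘ s) (σ * s) (σ * s) (fun x h1 h2 => ⟨rfl, (hcong x h1 h2).2⟩),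
      ← hdrop b (b ∘ s) (σ * s) (σ * s) (fun x h1 h2 => ⟨rfl, (hcong x h1 h2).2⟩)]
    rw [htake b b (σ * s) σ (fun x h1 h2 => ⟨(hcong x h1 h2).1, rfl⟩),
      hdrop b b (σ * s) σ (fun x h1 h2 => ⟨(hcong x h1 h2).1, rfl⟩)]
    have hmidA : a ((σ * s) p) = a (σ q) := by
      show a (σ (s p)) = a (σ q); rw [hsp]
    have hmidB : a ((σ * s) q) = a (σ p) := by
      show a (σ (s q)) = a (σ p); rw [hsq]
    have hmidC : (b ∘ s) p = b q := by show b (s p) = b q; rw [hsp]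
    have hmidD : (b ∘ s) q = b p := by show b (s q) = b p; rw [hsq]
    rw [hmidA, hmidB, hmidC, hmidD]
    simp only [hF]
    rw [hcq]
    apply prod_mid_sub
    exact (M_symm hT (a (σ p)) (a (σ q)) (b p) (b q) (((p:ℕ):K))).symm
  have key : qminor K T a b + qminor K T a (b ∘ s)
      = ∑ σ : Equiv.Perm (Fin m),
          (Equiv.Perm.sign σ : ℤ) • (P b σ - P (b ∘ s) (σ * s)) := by
    rw [hqm b, hqm (b ∘ s)]
    have hre : (∑ σ : Equiv.Perm (Fin m), (Equiv.Perm.sign σ : ℤ) • P (b ∘ s) σ)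
        = ∑ σ : Equiv.Perm (Fin m), (Equiv.Perm.sign (σ * s) : ℤ) • P (b ∘ s) (σ * s) :=
      (Equiv.sum_comp (Equiv.mulRight s)
        (fun σ => (Equiv.Perm.sign σ : ℤ) • P (b ∘ s) σ)).symm
    rw [hre, ← Finset.sum_add_distrib]
    apply Finset.sum_congr rfl
    intro σ _
    rw [hsign σ, neg_smul, ← sub_eq_add_neg, ← smul_sub]
  have hS : (∑ σ : Equiv.Perm (Fin m),
      (Equiv.Perm.sign σ : ℤ) • (P b σ - P (b ∘ s) (σ * s))) = 0 := by
    apply eq_zero_of_self_eq_neg (K := K)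
    calc (∑ σ : Equiv.Perm (Fin m), (Equiv.Perm.sign σ : ℤ) • (P b σ - P (b ∘ s) (σ * s)))
        = ∑ σ : Equiv.Perm (Fin m),
            (Equiv.Perm.sign (σ * s) : ℤ) • (P b (σ * s) - P (b ∘ s) ((σ * s) * s)) :=
          (Equiv.sum_comp (Equiv.mulRight s)
            (fun σ => (Equiv.Perm.sign σ : ℤ) • (P b σ - P (b ∘ s) (σ * s)))).symm
      _ = ∑ σ : Equiv.Perm (Fin m),
            -((Equiv.Perm.sign σ : ℤ) • (P b σ - P (b ∘ s) (σ * s))) := by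
          apply Finset.sum_congr rfl
          intro σ _
          rw [hsign σ, hD σ, neg_smul]
      _ = -∑ σ : Equiv.Perm (Fin m),
            (Equiv.Perm.sign σ : ℤ) • (P b σ - P (b ∘ s) (σ * s)) := by
          rw [Finset.sum_neg_distrib]
  exact eq_neg_of_add_eq_zero_right (key.trans hS)


lemma qminor_col_repeat (hT : RTTrel T) :
    ∀ (d : ℕ) (b : Fin m → Fin n) (i j : Fin m), (i:ℕ) < (j:ℕ) → (j:ℕ) - (i:ℕ) ≤ d →
      b i = b j → qminor K T a b = 0 := by
  intro d
  induction d with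
  | zero => intro b i j h1 h2 _; omega
  | succ d ih =>
    intro b i j h1 h2 hb
    by_cases hadj : (j:ℕ) = (i:ℕ) + 1
    · have hswap := qminor_swap_adjacent (K := K) a b hT hadj
      have hcomp : b ∘ (Equiv.swap i j) = b := by
        funext x
        by_cases hx : x = i
        · rw [hx]; simp only [Function.comp_apply, Equiv.swap_apply_left]; exact hb.symm
        · by_cases hx' : x = j
          · rw [hx']; simp only [Function.comp_apply, Equiv.swap_apply_right]; exact hb
          · simp only [Function.comp_apply, Equiv.swap_apply_of_ne_of_ne hx hx']
      rw [hcomp] at hswap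
      exact eq_zero_of_self_eq_neg (K := K) hswap
    · set p : Fin m := ⟨(j:ℕ) - 1, by omega⟩ with hp
      have hpv : (p:ℕ) = (j:ℕ) - 1 := rfl
      have hq : (j:ℕ) = (p:ℕ) + 1 := by omega
      have hip : (i:ℕ) < (p:ℕ) := by omega
      have hswap := qminor_swap_adjacent (K := K) a b hT hq
      have hb' : (b ∘ (Equiv.swap p j)) i = (b ∘ (Equiv.swap p j)) p := by
        have hi1 : i ≠ p := by intro h; rw [h] at hip; omega
        have hi2 : i ≠ j := by intro h; rw [h] at h1; omega
        simp only [Function.comp_apply, Equiv.swap_apply_of_ne_of_ne hi1 hi2,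
          Equiv.swap_apply_left]
        exact hb
      have h0 := ih (b ∘ (Equiv.swap p j)) i p hip (by omega) hb'
      rw [h0] at hswap
      exact neg_eq_zero.mp hswap.symm

end Minor


end Aux

/-- under the RTT relations, quantum minors are alternating: a repeated
row index or a repeated column index makes the quantum minor vanish. -/
theorem qminor_alternating
    {K : Type*} [Field K] [CharZero K] {A : Type*} [Ring A] [Algebra K A]
    {n : ℕ} (hn : 2 ≤ n) (T : Fin n → Fin n → ℕ → A) (hT : RTTrel T)
    {m : ℕ} (hm : 1 ≤ m) (a b : Fin m → Fin n)
    (h : (∃ i j : Fin m, i ≠ j ∧ a i = a j) ∨ (∃ i j : Fin m, i ≠ j ∧ b i = b j)) :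
    qminor K T a b = 0 := by
  rcases h with ⟨i, j, hij, ha⟩ | ⟨i, j, hij, hb⟩
  · exact qminor_row_repeat a b hij ha
  · have hne : (i:ℕ) ≠ (j:ℕ) := fun h => hij (Fin.ext h)
    rcases Nat.lt_or_ge (i:ℕ) (j:ℕ) with hlt | hge
    · exact qminor_col_repeat a hT ((j:ℕ) - (i:ℕ)) b i j hlt le_rfl hb
    · have hlt : (j:ℕ) < (i:ℕ) := by omega
      exact qminor_col_repeat a hT ((i:ℕ) - (j:ℕ)) b j i hlt le_rfl hb.symm
end

section
/- Comultiplication of the Drinfel'd generator e of Y(sl_2), in closed form: let n = 2 and assume the RTT relations. Define E(u) := T_{1,1}(u)^{-1} T_{1,2}(u), F(u) := T_{2,1}(u) T_{1,1}(u)^{-1}, and H(u) := T_{1,1}(u)^{-1} T_{2,2}(u) − F(u+1) E(u) in A⟦u^{-1}⟧ (T_{1,1}(u) is invertible since its constant term is 1). Let T'_{i,j}(u) := Σ_{k=1}^{2} T_{i,k}(u) ⊗ T_{k,j}(u) in (A⊗_K A)⟦u^{-1}⟧ and E'(u) := T'_{1,1}(u)^{-1} T'_{1,2}(u). Then (1⊗1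 + E(u) ⊗ F(u+1)) · E'(u) = 1 ⊗ E(u) + E(u) ⊗ ( H(u) + F(u+1) E(u) ). (Equivalently, since 1⊗1 + E(u)⊗F(u+1) is invertible, E'(u) = 1⊗E(u) + Σ_{m≥0} (−1)^m E(u)^{m+1} ⊗ F(u+1)^m H(u).) -/
open scoped TensorProduct

/-- The coefficients of the RTT comultiplication
`Δ(T_{i,j}(u)) = ∑_{l} T_{i,l}(u) ⊗ T_{l,j}(u)`:
`T'^{(k)}_{i,j} = ∑_{l} ∑_{p+q=k} T_{i,l}^{(p)} ⊗ T_{l,j}^{(q)}`. -/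
noncomputable def coprodT (K : Type*) [Field K] {A : Type*} [Ring A] [Algebra K A]
    {n : ℕ} (T : Fin n → Fin n → ℕ → A) : Fin n → Fin n → ℕ → (A ⊗[K] A) :=
  fun i j k => ∑ l : Fin n, ∑ p ∈ Finset.range (k + 1), T i l p ⊗ₜ[K] T l j (k - p)

section Aux

variable {K : Type*} [Field K] {A : Type*} [Ring A] [Algebra K A]

/-- coefficient of `u^{-m}` in `(u+1)^{-s}`. -/
noncomputable def ccY (K : Type*) [Field K] (m s : ℕ) : K :=
  if s ≤ m then (-1 : K) ^ (m - s) * ((m - 1).choose (m - s) : K) else 0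

lemma ccY_eq_zero {m s : ℕ} (h : m < s) : ccY K m s = 0 := if_neg (by omega)

lemma ccY_rec (m s : ℕ) : ccY K m s = ccY K (m + 1) (s + 1) + ccY K m (s + 1) := by
  rcases lt_trichotomy m s with h | h | h
  · rw [ccY_eq_zero h, ccY_eq_zero (by omega), ccY_eq_zero (by omega)]; ring
  · subst h
    rw [ccY, if_pos le_rfl, ccY, if_pos le_rfl, ccY_eq_zero (by omega)]
    simp
  · obtain ⟨m', rfl⟩ : ∃ m', m = m' + 1 := ⟨m - 1, by omega⟩
    obtain ⟨j, hj⟩ : ∃ j, m' + 1 - s = j + 1 := ⟨m' - s, by omega⟩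
    rw [ccY, if_pos (by omega), ccY, if_pos (by omega), ccY, if_pos (by omega)]
    have h1 : m' + 1 + 1 - (s + 1) = j + 1 := by omega
    have h2 : m' + 1 - (s + 1) = j := by omega
    have h3 : m' + 1 - 1 = m' := by omega
    have h4 : m' + 1 + 1 - 1 = m' + 1 := by omega
    rw [hj, h1, h2, h3, h4, Nat.choose_succ_succ m' j]
    push_cast
    ring

lemma coeff_shiftPS_one (f : ℕ → A) (t : ℕ) :
    (PowerSeries.coeff t) (shiftPS K 1 (PowerSeries.mk f)) =
      ∑ s ∈ Finset.range (t + 1), ccY K t s • f s := by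
  simp only [shiftPS, PowerSeries.coeff_mk, one_pow, mul_one]
  refine Finset.sum_congr rfl fun s hs => ?_
  rw [Finset.mem_range] at hs
  rw [ccY, if_pos (by omega)]

lemma coeff_mul_shiftPS (X Y : ℕ → A) (k : ℕ) :
    (PowerSeries.coeff k) (PowerSeries.mk X * shiftPS K 1 (PowerSeries.mk Y)) =
      ∑ r ∈ Finset.range (k + 1), ∑ s ∈ Finset.range (k + 1),
        ccY K (k - r) s • (X r * Y s) := by
  rw [PowerSeries.coeff_mul, Finset.Nat.sum_antidiagonal_eq_sum_range_succ
    (fun a b => (PowerSeries.coeff a) (PowerSeries.mk X)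
      * (PowerSeries.coeff b) (shiftPS K 1 (PowerSeries.mk Y)))]
  refine Finset.sum_congr rfl fun r hr => ?_
  rw [Finset.mem_range] at hr
  rw [PowerSeries.coeff_mk, coeff_shiftPS_one, Finset.mul_sum]
  calc ∑ s ∈ Finset.range (k - r + 1), X r * (ccY K (k - r) s • Y s)
      = ∑ s ∈ Finset.range (k - r + 1), ccY K (k - r) s • (X r * Y s) :=
        Finset.sum_congr rfl fun s _ => mul_smul_comm _ _ _
    _ = ∑ s ∈ Finset.range (k + 1), ccY K (k - r) s • (X r * Y s) := by
        refine Finset.sum_subset (Finset.range_subset_range.2 (by omega)) fun s _ hs => ?_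
        rw [Finset.mem_range, not_lt] at hs
        rw [ccY_eq_zero (by omega), zero_smul]

lemma square_sum_vanish (k : ℕ) (C : ℕ → ℕ → A)
    (hC0 : ∀ s, C 0 s = 0) (hCr : ∀ r, C r 0 = 0) :
    ∑ r ∈ Finset.range (k + 1), ∑ s ∈ Finset.range (k + 1),
      ccY K (k - r) s • (C r (s + 1) - C (r + 1) s - C r s) = 0 := by
  simp only [smul_sub, Finset.sum_sub_distrib]
  have e1 : ∑ r ∈ Finset.range (k + 1), ∑ s ∈ Finset.range (k + 1),
      ccY K (k - r) s • C r (s + 1)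
      = ∑ r ∈ Finset.range (k + 2), ∑ s ∈ Finset.range (k + 2),
          (if 1 ≤ s ∧ r ≤ k then ccY K (k - r) (s - 1) else 0) • C r s := by
    calc ∑ r ∈ Finset.range (k + 1), ∑ s ∈ Finset.range (k + 1),
          ccY K (k - r) s • C r (s + 1)
        = ∑ r ∈ Finset.range (k + 1), ∑ s ∈ Finset.range (k + 2),
            (if 1 ≤ s ∧ r ≤ k then ccY K (k - r) (s - 1) else 0) • C r s := by
          refine Finset.sum_congr rfl fun r hr => ?_
          rw [Finset.mem_range] at hr
          rw [Finset.sum_range_succ' (fun s =>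
            (if 1 ≤ s ∧ r ≤ k then ccY K (k - r) (s - 1) else 0) • C r s) (k + 1)]
          rw [if_neg (by omega), zero_smul, add_zero]
          refine Finset.sum_congr rfl fun s _ => ?_
          rw [if_pos ⟨by omega, by omega⟩]
          norm_num
      _ = ∑ r ∈ Finset.range (k + 2), ∑ s ∈ Finset.range (k + 2),
            (if 1 ≤ s ∧ r ≤ k then ccY K (k - r) (s - 1) else 0) • C r s := by
          refine Finset.sum_subset (Finset.range_subset_range.2 (by omega)) fun r _ hr => ?_
          rw [Finset.mem_range, not_lt] at hr
          exact Finset.sum_eq_zero fun s _ => by rw [if_neg (by omega), zero_smul]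
  have e2 : ∑ r ∈ Finset.range (k + 1), ∑ s ∈ Finset.range (k + 1),
      ccY K (k - r) s • C (r + 1) s
      = ∑ r ∈ Finset.range (k + 2), ∑ s ∈ Finset.range (k + 2),
          (if 1 ≤ r then ccY K (k - (r - 1)) s else 0) • C r s := by
    calc ∑ r ∈ Finset.range (k + 1), ∑ s ∈ Finset.range (k + 1),
          ccY K (k - r) s • C (r + 1) s
        = ∑ r ∈ Finset.range (k + 1), ∑ s ∈ Finset.range (k + 2),
            ccY K (k - r) s • C (r + 1) s := by
          refine Finset.sum_congr rfl fun r hr => ?_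
          rw [Finset.mem_range] at hr
          refine Finset.sum_subset (Finset.range_subset_range.2 (by omega)) fun s _ hs => ?_
          rw [Finset.mem_range, not_lt] at hs
          rw [ccY_eq_zero (by omega), zero_smul]
      _ = ∑ r ∈ Finset.range (k + 2), ∑ s ∈ Finset.range (k + 2),
            (if 1 ≤ r then ccY K (k - (r - 1)) s else 0) • C r s := by
          rw [Finset.sum_range_succ' (fun r => ∑ s ∈ Finset.range (k + 2),
            (if 1 ≤ r then ccY K (k - (r - 1)) s else 0) • C r s) (k + 1)]
          have h0 : (∑ s ∈ Finset.range (k + 2),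
              (if 1 ≤ (0 : ℕ) then ccY K (k - (0 - 1)) s else 0) • C 0 s) = 0 :=
            Finset.sum_eq_zero fun s _ => by rw [if_neg (by omega), zero_smul]
          rw [h0, add_zero]
          refine Finset.sum_congr rfl fun r hr => Finset.sum_congr rfl fun s _ => ?_
          rw [if_pos (by omega)]
          norm_num
  have e3 : ∑ r ∈ Finset.range (k + 1), ∑ s ∈ Finset.range (k + 1),
      ccY K (k - r) s • C r s
      = ∑ r ∈ Finset.range (k + 2), ∑ s ∈ Finset.range (k + 2),
          ccY K (k - r) s • C r s := by
    calc ∑ r ∈ Finset.range (k + 1), ∑ s ∈ Finset.range (k + 1), ccY K (k - r) s • C r s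
        = ∑ r ∈ Finset.range (k + 1), ∑ s ∈ Finset.range (k + 2),
            ccY K (k - r) s • C r s := by
          refine Finset.sum_congr rfl fun r hr => ?_
          rw [Finset.mem_range] at hr
          refine Finset.sum_subset (Finset.range_subset_range.2 (by omega)) fun s _ hs => ?_
          rw [Finset.mem_range, not_lt] at hs
          rw [ccY_eq_zero (by omega), zero_smul]
      _ = ∑ r ∈ Finset.range (k + 2), ∑ s ∈ Finset.range (k + 2),
            ccY K (k - r) s • C r s := by
          refine Finset.sum_subset (Finset.range_subset_range.2 (by omega)) fun r _ hr => ?_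
          rw [Finset.mem_range, not_lt] at hr
          refine Finset.sum_eq_zero fun s _ => ?_
          rcases Nat.eq_zero_or_pos s with rfl | hs
          · rw [hCr, smul_zero]
          · rw [ccY_eq_zero (by omega), zero_smul]
  rw [e1, e2, e3]
  simp only [← Finset.sum_sub_distrib]
  refine Finset.sum_eq_zero fun r hr => Finset.sum_eq_zero fun s hs => ?_
  rw [Finset.mem_range] at hr hs
  rcases Nat.eq_zero_or_pos r with rfl | hr1
  · rw [hC0, smul_zero, smul_zero, smul_zero, sub_zero, sub_zero]
  rcases Nat.eq_zero_or_pos s with rfl | hs1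
  · rw [hCr, smul_zero, smul_zero, smul_zero, sub_zero, sub_zero]
  rw [← sub_smul, ← sub_smul]
  have hz : (if 1 ≤ s ∧ r ≤ k then ccY K (k - r) (s - 1) else 0)
      - (if 1 ≤ r then ccY K (k - (r - 1)) s else 0) - ccY K (k - r) s = 0 := by
    rcases Nat.lt_or_ge k r with hk | hk
    · rw [if_neg (by omega), if_pos (by omega),
        ccY_eq_zero (show k - (r - 1) < s by omega),
        ccY_eq_zero (show k - r < s by omega)]
      ring
    · rw [if_pos ⟨by omega, by omega⟩, if_pos (by omega),
        show k - (r - 1) = (k - r) + 1 by omega,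
        ccY_rec (k - r) (s - 1), show s - 1 + 1 = s by omega]
      ring
  rw [hz, zero_smul]

lemma key_shift_comm (X Y : ℕ → A) (hX0 : X 0 = 1) (hY0 : Y 0 = 0)
    (hrel : ∀ r s : ℕ,
      (Y r * X (s + 1) - X (s + 1) * Y r) - (Y (r + 1) * X s - X s * Y (r + 1))
        = X r * Y s - X s * Y r) :
    (PowerSeries.mk X) * shiftPS K 1 (PowerSeries.mk Y)
      = (PowerSeries.mk Y) * shiftPS K 1 (PowerSeries.mk X) := by
  ext k
  rw [coeff_mul_shiftPS, coeff_mul_shiftPS, ← sub_eq_zero]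
  simp only [← Finset.sum_sub_distrib, ← smul_sub]
  have key0 : ∀ r s : ℕ, X r * Y s - Y r * X s
      = (Y r * X (s + 1) - X (s + 1) * Y r) - (Y (r + 1) * X s - X s * Y (r + 1))
        - (Y r * X s - X s * Y r) := by
    intro r s
    rw [hrel r s]
    abel
  simp only [key0]
  exact square_sum_vanish k (fun r s => Y r * X s - X s * Y r)
    (fun s => by show Y 0 * X s - X s * Y 0 = 0; rw [hY0, zero_mul, mul_zero, sub_zero])
    (fun r => by show Y r * X 0 - X 0 * Y r = 0; rw [hX0, mul_one, one_mul, sub_self])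

end Aux
section Aux2

open scoped TensorProduct

variable {K : Type*} [Field K] {A : Type*} [Ring A] [Algebra K A]

lemma ps_exists_inv {R : Type*} [Ring R] (f : PowerSeries R)
    (hf : PowerSeries.constantCoeff f = 1) :
    ∃ V : PowerSeries R, f * V = 1 ∧ V * f = 1 :=
  ⟨f.invOfUnit 1, PowerSeries.mul_invOfUnit f 1 (by simp [hf]),
    PowerSeries.invOfUnit_mul f 1 (by simp [hf])⟩

lemma incLR_mul (x y : A) :
    (Algebra.TensorProduct.includeLeftRingHom : A →+* A ⊗[K] A) x *
      ((Algebra.TensorProduct.includeRight : A →ₐ[K] A ⊗[K] A) : A →+* A ⊗[K] A) y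
      = x ⊗ₜ[K] y := by
  simp [Algebra.TensorProduct.includeLeftRingHom_apply,
    Algebra.TensorProduct.includeRight_apply, Algebra.TensorProduct.tmul_mul_tmul]

lemma incRL_mul (x y : A) :
    ((Algebra.TensorProduct.includeRight : A →ₐ[K] A ⊗[K] A) : A →+* A ⊗[K] A) y *
      (Algebra.TensorProduct.includeLeftRingHom : A →+* A ⊗[K] A) x
      = x ⊗ₜ[K] y := by
  simp [Algebra.TensorProduct.includeLeftRingHom_apply,
    Algebra.TensorProduct.includeRight_apply, Algebra.TensorProduct.tmul_mul_tmul]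

lemma LR_comm (f g : PowerSeries A) :
    PowerSeries.map (Algebra.TensorProduct.includeLeftRingHom : A →+* A ⊗[K] A) f *
      PowerSeries.map
        ((Algebra.TensorProduct.includeRight : A →ₐ[K] A ⊗[K] A) : A →+* A ⊗[K] A) g
    = PowerSeries.map
        ((Algebra.TensorProduct.includeRight : A →ₐ[K] A ⊗[K] A) : A →+* A ⊗[K] A) g *
      PowerSeries.map (Algebra.TensorProduct.includeLeftRingHom : A →+* A ⊗[K] A) f := by
  ext k
  rw [PowerSeries.coeff_mul, PowerSeries.coeff_mul, ← Finset.Nat.sum_antidiagonal_swap]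
  refine Finset.sum_congr rfl fun p _ => ?_
  simp only [Prod.fst_swap, Prod.snd_swap, PowerSeries.coeff_map]
  rw [incLR_mul, incRL_mul]

lemma LR_expand (f g : ℕ → A) :
    PowerSeries.map (Algebra.TensorProduct.includeLeftRingHom : A →+* A ⊗[K] A)
        (PowerSeries.mk f) *
      PowerSeries.map
        ((Algebra.TensorProduct.includeRight : A →ₐ[K] A ⊗[K] A) : A →+* A ⊗[K] A)
        (PowerSeries.mk g)
    = PowerSeries.mk (fun k => ∑ p ∈ Finset.range (k + 1), f p ⊗ₜ[K] g (k - p)) := by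
  ext k
  rw [PowerSeries.coeff_mul, Finset.Nat.sum_antidiagonal_eq_sum_range_succ_mk,
    PowerSeries.coeff_mk]
  refine Finset.sum_congr rfl fun p _ => ?_
  simp only [PowerSeries.coeff_map, PowerSeries.coeff_mk]
  rw [incLR_mul]

end Aux2
section Aux3

open scoped TensorProduct

variable {K : Type*} [Field K] {A : Type*} [Ring A] [Algebra K A]

lemma coprod_expand (T : Fin 2 → Fin 2 → ℕ → A) (i j : Fin 2) :
    (PowerSeries.mk fun k => coprodT K T i j k)
      = PowerSeries.map (Algebra.TensorProduct.includeLeftRingHom : A →+* A ⊗[K] A)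
          (PowerSeries.mk fun k => T i 0 k)
        * PowerSeries.map
            ((Algebra.TensorProduct.includeRight : A →ₐ[K] A ⊗[K] A) : A →+* A ⊗[K] A)
            (PowerSeries.mk fun k => T 0 j k)
      + PowerSeries.map (Algebra.TensorProduct.includeLeftRingHom : A →+* A ⊗[K] A)
          (PowerSeries.mk fun k => T i 1 k)
        * PowerSeries.map
            ((Algebra.TensorProduct.includeRight : A →ₐ[K] A ⊗[K] A) : A →+* A ⊗[K] A)
            (PowerSeries.mk fun k => T 1 j k) := by
  rw [LR_expand, LR_expand]
  ext k
  rw [map_add, PowerSeries.coeff_mk, PowerSeries.coeff_mk, PowerSeries.coeff_mk]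
  simp [coprodT, Fin.sum_univ_two]

lemma rearr {R : Type*} [Ring R] (x y z w : R) (h : y * z = z * y) :
    (x * y) * (z * w) = (x * z) * (y * w) := by
  rw [mul_assoc, ← mul_assoc y z w, h, mul_assoc z y w, ← mul_assoc]

lemma main_core (a b c d V0 V1 : PowerSeries A) (b1 a1 : PowerSeries A)
    (W0 T00' T01' : PowerSeries (A ⊗[K] A))
    (hV0r : a * V0 = 1) (hV0l : V0 * a = 1)
    (hV1r : a1 * V1 = 1)
    (hW0r : T00' * W0 = 1) (hW0l : W0 * T00' = 1)
    (hkey : a * b1 = b * a1)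
    (hT00' : T00'
      = PowerSeries.map (Algebra.TensorProduct.includeLeftRingHom : A →+* A ⊗[K] A) a
          * PowerSeries.map
              ((Algebra.TensorProduct.includeRight : A →ₐ[K] A ⊗[K] A) : A →+* A ⊗[K] A) a
        + PowerSeries.map (Algebra.TensorProduct.includeLeftRingHom : A →+* A ⊗[K] A) c
          * PowerSeries.map
              ((Algebra.TensorProduct.includeRight : A →ₐ[K] A ⊗[K] A) : A →+* A ⊗[K] A) b)
    (hT01' : T01'
      = PowerSeries.map (Algebra.TensorProduct.includeLeftRingHom : A →+* A ⊗[K] A) a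
          * PowerSeries.map
              ((Algebra.TensorProduct.includeRight : A →ₐ[K] A ⊗[K] A) : A →+* A ⊗[K] A) c
        + PowerSeries.map (Algebra.TensorProduct.includeLeftRingHom : A →+* A ⊗[K] A) c
          * PowerSeries.map
              ((Algebra.TensorProduct.includeRight : A →ₐ[K] A ⊗[K] A) : A →+* A ⊗[K] A) d) :
    ((1 : PowerSeries (A ⊗[K] A))
        + PowerSeries.map (Algebra.TensorProduct.includeLeftRingHom : A →+* A ⊗[K] A)
            (V0 * c)
          * PowerSeries.map
              ((Algebra.TensorProduct.includeRight : A →ₐ[K] A ⊗[K] A) : A →+* A ⊗[K] A)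
              (b1 * V1))
      * (W0 * T01')
    = PowerSeries.map
          ((Algebra.TensorProduct.includeRight : A →ₐ[K] A ⊗[K] A) : A →+* A ⊗[K] A)
          (V0 * c)
      + PowerSeries.map (Algebra.TensorProduct.includeLeftRingHom : A →+* A ⊗[K] A)
          (V0 * c)
        * PowerSeries.map
            ((Algebra.TensorProduct.includeRight : A →ₐ[K] A ⊗[K] A) : A →+* A ⊗[K] A)
            (V0 * d) := by
  set L := PowerSeries.map (Algebra.TensorProduct.includeLeftRingHom : A →+* A ⊗[K] A)
    with hLdef
  set R := PowerSeries.map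
    ((Algebra.TensorProduct.includeRight : A →ₐ[K] A ⊗[K] A) : A →+* A ⊗[K] A) with hRdef
  have comm : ∀ f g : PowerSeries A, R g * L f = L f * R g := fun f g =>
    (LR_comm f g).symm
  have F4 : T00' = (L a * R a) * (1 + L (V0 * c) * R (b1 * V1)) := by
    rw [mul_add, mul_one, rearr _ _ _ _ (comm (V0 * c) a), ← map_mul, ← map_mul,
      show a * (V0 * c) = c by rw [← mul_assoc, hV0r, one_mul],
      show a * (b1 * V1) = b by rw [← mul_assoc, hkey, mul_assoc, hV1r, mul_one],
      hT00']
  have hinvL : (R V0 * L V0) * (L a * R a) = 1 := by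
    rw [mul_assoc (R V0) (L V0) (L a * R a), ← mul_assoc (L V0) (L a) (R a),
      ← map_mul, hV0l, map_one, one_mul, ← map_mul, hV0l, map_one]
  have F5 : (1 + L (V0 * c) * R (b1 * V1)) * W0 = L V0 * R V0 := by
    have h1 : (L a * R a) * ((1 + L (V0 * c) * R (b1 * V1)) * W0) = 1 := by
      rw [← mul_assoc, ← F4, hW0r]
    calc (1 + L (V0 * c) * R (b1 * V1)) * W0
        = ((R V0 * L V0) * (L a * R a)) * ((1 + L (V0 * c) * R (b1 * V1)) * W0) := by
          rw [hinvL, one_mul]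
      _ = (R V0 * L V0) * ((L a * R a) * ((1 + L (V0 * c) * R (b1 * V1)) * W0)) := by
          rw [mul_assoc]
      _ = R V0 * L V0 := by rw [h1, mul_one]
      _ = L V0 * R V0 := comm V0 V0
  calc (1 + L (V0 * c) * R (b1 * V1)) * (W0 * T01')
      = ((1 + L (V0 * c) * R (b1 * V1)) * W0) * T01' := by rw [mul_assoc]
    _ = (L V0 * R V0) * (L a * R c + L c * R d) := by rw [F5, hT01']
    _ = (L V0 * R V0) * (L a * R c) + (L V0 * R V0) * (L c * R d) := by rw [mul_add]
    _ = (L V0 * L a) * (R V0 * R c) + (L V0 * L c) * (R V0 * R d) := by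
        rw [rearr _ _ _ _ (comm a V0), rearr _ _ _ _ (comm c V0)]
    _ = R (V0 * c) + L (V0 * c) * R (V0 * d) := by
        rw [← map_mul, ← map_mul, ← map_mul, ← map_mul, hV0l, map_one, one_mul]

end Aux3

/-- closed form for the comultiplication of the Drinfel'd generator `e` of
`Y(sl₂)`: with `E(u) = T₁₁(u)⁻¹T₁₂(u)`, `F(u) = T₂₁(u)T₁₁(u)⁻¹`,
`H(u) = T₁₁(u)⁻¹T₂₂(u) − F(u+1)E(u)` and `E'(u) = T'₁₁(u)⁻¹T'₁₂(u)` built from the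
comultiplied family `T'`, one has
`(1⊗1 + E(u)⊗F(u+1)) · E'(u) = 1⊗E(u) + E(u)⊗(H(u) + F(u+1)E(u))`.
The (two-sided) inverses `V0, V1, W0` of `T₁₁(u)`, `T₁₁(u+1)`, `T'₁₁(u)` exist since these
series have constant term `1`. -/
theorem coprod_drinfeld_e_Ysl2
    {K : Type*} [Field K] [CharZero K] {A : Type*} [Ring A] [Algebra K A]
    (T : Fin 2 → Fin 2 → ℕ → A) (hT : RTTrel T) :
    (∃ V : PowerSeries A,
        (PowerSeries.mk fun k => T 0 0 k) * V = 1 ∧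
        V * (PowerSeries.mk fun k => T 0 0 k) = 1) ∧
    (∃ V : PowerSeries A,
        shiftPS K 1 (PowerSeries.mk fun k => T 0 0 k) * V = 1 ∧
        V * shiftPS K 1 (PowerSeries.mk fun k => T 0 0 k) = 1) ∧
    (∃ W : PowerSeries (A ⊗[K] A),
        (PowerSeries.mk fun k => coprodT K T 0 0 k) * W = 1 ∧
        W * (PowerSeries.mk fun k => coprodT K T 0 0 k) = 1) ∧
    ∀ (V0 V1 : PowerSeries A) (W0 : PowerSeries (A ⊗[K] A)),
      (PowerSeries.mk fun k => T 0 0 k) * V0 = 1 →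
      V0 * (PowerSeries.mk fun k => T 0 0 k) = 1 →
      shiftPS K 1 (PowerSeries.mk fun k => T 0 0 k) * V1 = 1 →
      V1 * shiftPS K 1 (PowerSeries.mk fun k => T 0 0 k) = 1 →
      (PowerSeries.mk fun k => coprodT K T 0 0 k) * W0 = 1 →
      W0 * (PowerSeries.mk fun k => coprodT K T 0 0 k) = 1 →
      ((1 : PowerSeries (A ⊗[K] A))
          + PowerSeries.map (Algebra.TensorProduct.includeLeftRingHom : A →+* A ⊗[K] A)
              (V0 * PowerSeries.mk fun k => T 0 1 k)
            * PowerSeries.map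
                ((Algebra.TensorProduct.includeRight : A →ₐ[K] A ⊗[K] A) : A →+* A ⊗[K] A)
                (shiftPS K 1 (PowerSeries.mk fun k => T 1 0 k) * V1))
        * (W0 * PowerSeries.mk fun k => coprodT K T 0 1 k)
      = PowerSeries.map
            ((Algebra.TensorProduct.includeRight : A →ₐ[K] A ⊗[K] A) : A →+* A ⊗[K] A)
            (V0 * PowerSeries.mk fun k => T 0 1 k)
        + PowerSeries.map (Algebra.TensorProduct.includeLeftRingHom : A →+* A ⊗[K] A)
            (V0 * PowerSeries.mk fun k => T 0 1 k)
          * PowerSeries.map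
              ((Algebra.TensorProduct.includeRight : A →ₐ[K] A ⊗[K] A) : A →+* A ⊗[K] A)
              ((V0 * (PowerSeries.mk fun k => T 1 1 k)
                  - (shiftPS K 1 (PowerSeries.mk fun k => T 1 0 k) * V1)
                    * (V0 * PowerSeries.mk fun k => T 0 1 k))
                + (shiftPS K 1 (PowerSeries.mk fun k => T 1 0 k) * V1)
                  * (V0 * PowerSeries.mk fun k => T 0 1 k)) := by
  obtain ⟨hT0, hTrel⟩ := hT
  have hA0 : T 0 0 0 = 1 := by simpa using hT0 0 0
  have hB0 : T 1 0 0 = 0 := by simpa using hT0 1 0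
  have hC0 : T 0 1 0 = 0 := by simpa using hT0 0 1
  have hc1 : PowerSeries.constantCoeff (PowerSeries.mk fun k => T 0 0 k) = 1 := by
    rw [PowerSeries.constantCoeff_mk]; exact hA0
  have hc2 : PowerSeries.constantCoeff
      (shiftPS K 1 (PowerSeries.mk fun k => T 0 0 k)) = 1 := by
    rw [← PowerSeries.coeff_zero_eq_constantCoeff_apply, coeff_shiftPS_one]
    simp [ccY, hA0]
  have hc3 : PowerSeries.constantCoeff
      (PowerSeries.mk fun k => coprodT K T 0 0 k) = 1 := by
    rw [PowerSeries.constantCoeff_mk]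
    simp [coprodT, Fin.sum_univ_two, hA0, hC0, Algebra.TensorProduct.one_def]
  refine ⟨ps_exists_inv _ hc1, ps_exists_inv _ hc2, ps_exists_inv _ hc3, ?_⟩
  intro V0 V1 W0 hV0r hV0l hV1r hV1l hW0r hW0l
  rw [sub_add_cancel]
  exact main_core (PowerSeries.mk fun k => T 0 0 k) (PowerSeries.mk fun k => T 1 0 k)
    (PowerSeries.mk fun k => T 0 1 k) (PowerSeries.mk fun k => T 1 1 k) V0 V1
    (shiftPS K 1 (PowerSeries.mk fun k => T 1 0 k))
    (shiftPS K 1 (PowerSeries.mk fun k => T 0 0 k)) W0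
    (PowerSeries.mk fun k => coprodT K T 0 0 k)
    (PowerSeries.mk fun k => coprodT K T 0 1 k)
    hV0r hV0l hV1r hW0r hW0l
    (key_shift_comm _ _ hA0 hB0 (fun r s => hTrel 1 0 0 0 r s))
    (coprod_expand T 0 0) (coprod_expand T 0 1)
end
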